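/- arXiv:1504.06344 — 6 statements merged into one kernel-verified Lean document; each statement's English description precedes it below -/
import Mathlib

section
/- If G is a forest on n vertices with exactly i+1 connected components and G belongs to a bridge-addable class 𝒢 of graphs on n vertices, then the number of graphs in 𝒢 with exactly i+1 components, multiplied by i, is at most the number of graphs in 𝒢 with exactly i components. That is, i·|𝒢^(i+1)| ≤ |𝒢^(i)| for all i ≥ 1. -/
open SimpleGraph

/-- Number of connected components of a graph. -/
noncomputable def numComponents {n : ℕ} (G : SimpleGraph (Fin n)) : ℕ := Nat.card G.ConnectedComponent

/-- A class of graphs on `Fin n` is bridge-addable if adding any edge between two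
vertices lying in different connected components of a member stays in the class. -/
def BridgeAddable {n : ℕ} (𝒢 : Set (SimpleGraph (Fin n))) : Prop :=
  ∀ G ∈ 𝒢, ∀ u v : Fin n, ¬ G.Reachable u v →
    G ⊔ SimpleGraph.fromEdgeSet {s(u, v)} ∈ 𝒢

/-- `𝒢^(i)`: members of the class with exactly `i` connected components. -/
noncomputable def compCount {n : ℕ} (𝒢 : Set (SimpleGraph (Fin n))) (i : ℕ) : ℕ :=
  {G ∈ 𝒢 | numComponents G = i}.ncard

/-!
Double counting between `𝒢^(i+1)` and `𝒢^(i)`, related by bridge addition: `H = G ⊔ edge u v`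
with `u`, `v` in different components of `G`. Such an `H` has one component fewer, and lies in `𝒢`
when `G` does. A graph `G` with `i + 1` components of sizes `a_c` has `∑ a_c (n - a_c) / 2`
unordered pairs of vertices in different components, at least `i (n - i)` of them, and distinct
pairs give distinct bridge additions. Conversely `G` is `H` minus the added edge, which is a bridge
of `H`, and a graph with `i` components has at most `n - i` bridges, since deleting a bridge raises
the number of components by one. Hence `|𝒢^(i+1)| · i (n - i) ≤ |𝒢^(i)| · (n - i)`, and
`n - i > 0` unless `𝒢^(i+1)` is empty.
-/

open Finset

theorem two_mul_mul_sub_le_sum_mul_sub {ι : Type*} {s : Finset ι} {a : ι → ℕ} {i N : ℕ}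
    (hs : #s = i + 1) (ha : ∀ c ∈ s, 1 ≤ a c) (hN : ∑ c ∈ s, a c = N) :
    2 * i * (N - i) ≤ ∑ c ∈ s, a c * (N - a c) := by
  classical
  have hrest : ∀ c ∈ s, i + a c ≤ N := fun c hc => by
    have := card_nsmul_le_sum (s.erase c) a 1 fun c' hc' => ha c' (mem_of_mem_erase hc')
    rw [card_erase_of_mem hc, hs, smul_eq_mul, mul_one, add_tsub_cancel_right] at this
    rw [← hN, ← add_sum_erase s a hc, add_comm]
    exact Nat.add_le_add_left this _
  have hiN : i ≤ N := by
    obtain ⟨c, hc⟩ : s.Nonempty := card_pos.mp (by omega)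
    exact (Nat.le_add_right _ _).trans (hrest c hc)
  have hcast : ((∑ c ∈ s, a c * (N - a c) : ℕ) : ℤ) = ∑ c ∈ s, (a c : ℤ) * (N - a c) := by
    push_cast
    exact sum_congr rfl fun c hc => by rw [Nat.cast_sub ((Nat.le_add_left _ _).trans (hrest c hc))]
  -- `(a - 1) * (N - a - i) ≥ 0`, summed over the parts
  have hterm : ∀ c ∈ s, (i * a c + (N - a c) : ℤ) ≤ a c * (N - a c) + i := fun c hc => by
    have := hrest c hc
    nlinarith [ha c hc]
  have hsum := sum_le_sum hterm
  simp only [sum_add_distrib, sum_sub_distrib, ← mul_sum, sum_const, hs, nsmul_eq_mul] at hsum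
  rw [show ∑ c ∈ s, (a c : ℤ) = N by exact_mod_cast hN] at hsum
  rw [← Nat.cast_le (α := ℤ), hcast]
  push_cast [hiN] at hsum ⊢
  have : (i : ℤ) ≤ i * i := by exact_mod_cast Nat.le_mul_self i
  linarith

namespace SimpleGraph

variable {V : Type*} {G : SimpleGraph V} {u v x y : V}

theorem adj_sup_edge (h : u ≠ v) : (G ⊔ edge u v).Adj u v :=
  .inr ((edge_adj ..).mpr ⟨.inl ⟨rfl, rfl⟩, h⟩)

theorem reachable_sup_edge_iff :
    (G ⊔ edge u v).Reachable x y ↔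
      G.Reachable x y ∨ (G.Reachable x u ∧ G.Reachable v y) ∨
        (G.Reachable x v ∧ G.Reachable u y) := by
  constructor
  · rintro ⟨w⟩
    induction w with
    | nil => exact .inl .rfl
    | @cons a b c hab _ ih =>
      rcases hab with hab | hab
      · have hab := hab.reachable
        rcases ih with h | ⟨h₁, h₂⟩ | ⟨h₁, h₂⟩
        · exact .inl (hab.trans h)
        · exact .inr (.inl ⟨hab.trans h₁, h₂⟩)
        · exact .inr (.inr ⟨hab.trans h₁, h₂⟩)
      · obtain ⟨⟨rfl, rfl⟩ | ⟨rfl, rfl⟩, -⟩ := (edge_adj ..).mp hab <;>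
          rcases ih with h | ⟨h₁, h₂⟩ | ⟨h₁, h₂⟩ <;> tauto
  · have huv : (G ⊔ edge u v).Reachable u v := by
      by_cases h : u = v
      · exact h ▸ .rfl
      · exact (adj_sup_edge h).reachable
    have hG : G ≤ G ⊔ edge u v := le_sup_left
    rintro (h | ⟨h₁, h₂⟩ | ⟨h₁, h₂⟩)
    · exact h.mono hG
    · exact (h₁.mono hG).trans (huv.trans (h₂.mono hG))
    · exact (h₁.mono hG).trans (huv.symm.trans (h₂.mono hG))

theorem card_connectedComponent_sup_edge [Finite V] (huv : ¬ G.Reachable u v) :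
    Nat.card (G ⊔ edge u v).ConnectedComponent + 1 = Nat.card G.ConnectedComponent := by
  set φ := ConnectedComponent.map (Hom.ofLE (le_sup_left : G ≤ G ⊔ edge u v))
  have hinj : Set.InjOn φ (Set.univ \ {G.connectedComponentMk v}) := by
    intro c hc c' hc'
    induction c using ConnectedComponent.ind
    induction c' using ConnectedComponent.ind
    intro hxy
    simp only [Set.mem_sdiff, Set.mem_univ, Set.mem_singleton_iff, true_and,
      ConnectedComponent.eq] at hc hc'
    simp only [φ, ConnectedComponent.map_mk, Hom.coe_ofLE, id, ConnectedComponent.eq,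
      reachable_sup_edge_iff] at hxy
    rcases hxy with h | ⟨-, h⟩ | ⟨h, -⟩
    · exact ConnectedComponent.sound h
    · exact absurd h.symm hc'
    · exact absurd h hc
  have himage : φ '' (Set.univ \ {G.connectedComponentMk v}) = Set.univ := by
    refine Set.eq_univ_of_forall (ConnectedComponent.ind fun x => ?_)
    by_cases hx : G.Reachable x v
    · refine ⟨G.connectedComponentMk u, by simpa [ConnectedComponent.eq] using huv, ?_⟩
      simp only [φ, ConnectedComponent.map_mk, Hom.coe_ofLE, id, ConnectedComponent.eq,
        reachable_sup_edge_iff]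
      exact .inr (.inl ⟨.rfl, hx.symm⟩)
    · exact ⟨G.connectedComponentMk x, by simpa [ConnectedComponent.eq] using hx, rfl⟩
  rw [← Set.ncard_univ, ← himage, hinj.ncard_image, ← Set.ncard_univ,
    Set.ncard_sdiff_singleton_add_one (Set.mem_univ _)]

theorem card_connectedComponent_le_card [Finite V] (G : SimpleGraph V) :
    Nat.card G.ConnectedComponent ≤ Nat.card V :=
  Nat.card_le_card_of_surjective _ fun c => c.ind fun v => ⟨v, rfl⟩

theorem deleteEdges_sup_edge_of_adj (h : G.Adj u v) : G.deleteEdges {s(u, v)} ⊔ edge u v = G := by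
  ext a b
  simp only [sup_adj, deleteEdges_adj, edge_adj, Set.mem_singleton_iff, Sym2.eq_iff]
  grind [Adj.ne, Adj.symm]

theorem sup_edge_deleteEdges_of_not_adj (h : ¬ G.Adj u v) :
    (G ⊔ edge u v).deleteEdges {s(u, v)} = G := by
  simpa [edge] using h

theorem ncard_bridges_add_card_connectedComponent_le [Finite V] (G : SimpleGraph V) :
    {e ∈ G.edgeSet | G.IsBridge e}.ncard + Nat.card G.ConnectedComponent ≤ Nat.card V := by
  suffices ∀ k (G : SimpleGraph V), k ≤ {e ∈ G.edgeSet | G.IsBridge e}.ncard →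
      k + Nat.card G.ConnectedComponent ≤ Nat.card V from this _ G le_rfl
  intro k
  induction k with
  | zero => simpa using card_connectedComponent_le_card
  | succ k ih =>
    intro G hk
    obtain ⟨e, he, hbr⟩ :=
      Set.nonempty_of_ncard_ne_zero (s := {e ∈ G.edgeSet | G.IsBridge e}) (by omega)
    induction e using Sym2.ind with | _ u v => ?_
    set G' := G.deleteEdges {s(u, v)}
    have hcard : Nat.card G'.ConnectedComponent = Nat.card G.ConnectedComponent + 1 := by
      rw [← card_connectedComponent_sup_edge (isBridge_iff.mp hbr),
        deleteEdges_sup_edge_of_adj he]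
    have hsub : {e ∈ G.edgeSet | G.IsBridge e} \ {s(u, v)} ⊆ {e ∈ G'.edgeSet | G'.IsBridge e} :=
      fun e ⟨⟨he, hbr⟩, hne⟩ =>
        ⟨by simp [G', edgeSet_deleteEdges, he, hne], hbr.anti (deleteEdges_le _)⟩
    have := Set.ncard_le_ncard hsub (Set.toFinite _)
    have := Set.ncard_sdiff_singleton_of_mem (s := {e ∈ G.edgeSet | G.IsBridge e}) ⟨he, hbr⟩
    have := ih G' (by omega)
    omega

def unreachableGraph (G : SimpleGraph V) : SimpleGraph V where
  Adj u v := ¬ G.Reachable u v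
  symm := ⟨fun _ _ h h' => h h'.symm⟩
  loopless := ⟨fun _ h => h .rfl⟩

@[simp]
theorem unreachableGraph_adj : G.unreachableGraph.Adj u v ↔ ¬ G.Reachable u v := .rfl

theorem unreachableGraph_le_compl : G.unreachableGraph ≤ Gᶜ :=
  fun _ _ h => (compl_adj ..).mpr ⟨G.unreachableGraph.ne_of_adj h, fun h' => h h'.reachable⟩

theorem mul_sub_le_ncard_edgeSet_unreachableGraph [Finite V] {i : ℕ}
    (hG : Nat.card G.ConnectedComponent = i + 1) :
    i * (Nat.card V - i) ≤ G.unreachableGraph.edgeSet.ncard := by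
  classical
  cases nonempty_fintype V
  rw [Nat.card_eq_fintype_card]
  set size : G.ConnectedComponent → ℕ := fun c => #{v | G.connectedComponentMk v = c}
  have hdegree : ∀ v, G.unreachableGraph.degree v =
      Fintype.card V - size (G.connectedComponentMk v) := fun v => by
    rw [← card_neighborFinset_eq_degree, ← card_compl]
    congr 1
    ext w
    simp [ConnectedComponent.eq, reachable_comm]
  have hsum : ∑ v, G.unreachableGraph.degree v =
      ∑ c, size c * (Fintype.card V - size c) := by
    simp only [hdegree, ← sum_fiberwise univ G.connectedComponentMk]
    refine sum_congr rfl fun c _ => ?_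
    rw [sum_congr rfl fun v hv => by rw [(mem_filter.mp hv).2], sum_const, smul_eq_mul]
  have hsize : ∑ c, size c = Fintype.card V :=
    (card_eq_sum_card_fiberwise fun v _ => mem_univ (G.connectedComponentMk v)).symm
  have hpos : ∀ c ∈ univ, 1 ≤ size c := fun c _ =>
    c.ind fun v => card_pos.mpr ⟨v, by simp⟩
  have := two_mul_mul_sub_le_sum_mul_sub (by rwa [card_univ, ← Nat.card_eq_fintype_card]) hpos hsize
  rw [← hsum, sum_degrees_eq_twice_card_edges, mul_assoc] at this
  rw [← coe_edgeFinset, Set.ncard_coe_finset]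
  omega

theorem injOn_sup_fromEdgeSet_singleton :
    Set.InjOn (fun e => G ⊔ fromEdgeSet {e}) Gᶜ.edgeSet := fun e he e' _ heq => by
  induction e using Sym2.ind with | _ a b => ?_
  induction e' using Sym2.ind with | _ c d => ?_
  obtain ⟨hne, hnadj⟩ := (compl_adj ..).mp he
  have hab : (G ⊔ edge c d).Adj a b := by
    beta_reduce at heq
    rw [edge, ← heq]
    exact adj_sup_edge hne
  rcases hab with h | h
  · exact absurd h hnadj
  · exact ((adj_edge ..).mp h).1.symm

def IsBridgeAddition (G H : SimpleGraph V) : Prop :=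
  ∃ u v, ¬ G.Reachable u v ∧ H = G ⊔ edge u v

theorem ncard_edgeSet_unreachableGraph_le_ncard_isBridgeAddition [Finite V] (G : SimpleGraph V) :
    G.unreachableGraph.edgeSet.ncard ≤ {H | IsBridgeAddition G H}.ncard := by
  have hmaps : (fun e => G ⊔ fromEdgeSet {e}) '' G.unreachableGraph.edgeSet ⊆
      {H | IsBridgeAddition G H} := by
    rintro _ ⟨e, he, rfl⟩
    induction e using Sym2.ind with | _ u v => exact ⟨u, v, he, rfl⟩
  rw [← (injOn_sup_fromEdgeSet_singleton.mono (edgeSet_mono unreachableGraph_le_compl)).ncard_image]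
  exact Set.ncard_le_ncard hmaps

theorem ncard_isBridgeAddition_le_ncard_bridges [Finite V] (H : SimpleGraph V) :
    {G | IsBridgeAddition G H}.ncard ≤ {e ∈ H.edgeSet | H.IsBridge e}.ncard := by
  have hsub : {G | IsBridgeAddition G H} ⊆
      (fun e => H.deleteEdges {e}) '' {e ∈ H.edgeSet | H.IsBridge e} := by
    rintro G ⟨u, v, huv, rfl⟩
    have hne : u ≠ v := by rintro rfl; exact huv .rfl
    refine ⟨s(u, v), ⟨adj_sup_edge hne, ?_⟩, ?_⟩
    · exact isBridge_sup_edge.mpr (IsBridge.of_not_reachable huv)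
    · exact sup_edge_deleteEdges_of_not_adj fun h => huv h.reachable
  exact (Set.ncard_le_ncard hsub).trans Set.ncard_image_le

theorem mul_sub_le_ncard_isBridgeAddition [Finite V] {i : ℕ}
    (hG : Nat.card G.ConnectedComponent = i + 1) :
    i * (Nat.card V - i) ≤ {H | IsBridgeAddition G H}.ncard :=
  (mul_sub_le_ncard_edgeSet_unreachableGraph hG).trans
    (ncard_edgeSet_unreachableGraph_le_ncard_isBridgeAddition G)

theorem ncard_isBridgeAddition_le [Finite V] {H : SimpleGraph V} {i : ℕ}
    (hH : Nat.card H.ConnectedComponent = i) :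
    {G | IsBridgeAddition G H}.ncard ≤ Nat.card V - i := by
  have := ncard_bridges_add_card_connectedComponent_le H
  have := ncard_isBridgeAddition_le_ncard_bridges H
  omega

end SimpleGraph

theorem compCount_eq_card {n : ℕ} (𝒢 : Set (SimpleGraph (Fin n))) (i : ℕ)
    [DecidablePred (· ∈ 𝒢)] : compCount 𝒢 i = #{G | G ∈ 𝒢 ∧ numComponents G = i} := by
  rw [compCount, ← Set.ncard_coe_finset, coe_filter]
  simp

theorem BridgeAddable.mem_and_numComponents_of_isBridgeAddition {n i : ℕ}
    {𝒢 : Set (SimpleGraph (Fin n))} (h : BridgeAddable 𝒢) {G H : SimpleGraph (Fin n)}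
    (hG : G ∈ 𝒢 ∧ numComponents G = i + 1) (hGH : IsBridgeAddition G H) :
    H ∈ 𝒢 ∧ numComponents H = i := by
  obtain ⟨u, v, huv, rfl⟩ := hGH
  have := card_connectedComponent_sup_edge huv
  exact ⟨h G hG.1 u v huv, by rw [numComponents] at hG ⊢; omega⟩

theorem stmt0_general {n : ℕ} (𝒢 : Set (SimpleGraph (Fin n))) (h : BridgeAddable 𝒢)
    (i : ℕ) :
    i * compCount 𝒢 (i + 1) ≤ compCount 𝒢 i := by
  classical
  rw [compCount_eq_card, compCount_eq_card]
  set A : Finset (SimpleGraph (Fin n)) := {G | G ∈ 𝒢 ∧ numComponents G = i + 1}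
  set B : Finset (SimpleGraph (Fin n)) := {H | H ∈ 𝒢 ∧ numComponents H = i}
  have hA : ∀ G ∈ A, i * (n - i) ≤ #(B.bipartiteAbove IsBridgeAddition G) := fun G hG => by
    replace hG : G ∈ 𝒢 ∧ numComponents G = i + 1 := by simpa [A] using hG
    have hAbove : (B.bipartiteAbove IsBridgeAddition G : Set _) = {H | IsBridgeAddition G H} := by
      rw [coe_bipartiteAbove]
      exact Set.ext fun H => ⟨fun hH => hH.2, fun hGH =>
        ⟨by simpa [B] using h.mem_and_numComponents_of_isBridgeAddition hG hGH, hGH⟩⟩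
    rw [← Set.ncard_coe_finset, hAbove]
    simpa only [Nat.card_fin] using mul_sub_le_ncard_isBridgeAddition hG.2
  have hB : ∀ H ∈ B, #(A.bipartiteBelow IsBridgeAddition H) ≤ n - i := fun H hH => by
    rw [← Set.ncard_coe_finset, coe_bipartiteBelow]
    calc _ ≤ {G | IsBridgeAddition G H}.ncard := Set.ncard_le_ncard fun G hG => hG.2
      _ ≤ n - i := by
        simpa only [Nat.card_fin] using ncard_isBridgeAddition_le (mem_filter.mp hH).2.2
  have hcount := card_mul_le_card_mul _ hA hB
  obtain hni | hni := (n - i).eq_zero_or_pos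
  · suffices A = ∅ by simp [this]
    refine eq_empty_of_forall_notMem fun G hG => ?_
    have := (card_connectedComponent_le_card G).trans_eq (Nat.card_fin n)
    have := (mem_filter.mp hG).2.2
    rw [numComponents] at this
    omega
  · exact Nat.le_of_mul_le_mul_right (by linarith) hni

/-- For a bridge-addable class `𝒢` on `n` vertices, `i·|𝒢^(i+1)| ≤ |𝒢^(i)|` for all `i ≥ 1`. -/
theorem stmt0 {n : ℕ} (𝒢 : Set (SimpleGraph (Fin n))) (h : BridgeAddable 𝒢)
    (i : ℕ) (hi : 1 ≤ i) :
    i * compCount 𝒢 (i + 1) ≤ compCount 𝒢 i :=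
  stmt0_general 𝒢 h i
end

section
/- Let T be a rooted unlabeled tree and e an edge of T whose removal splits T into the rooted component T₋ (containing the root, with attachment vertex v₋) and the unrooted component U₊ (with attachment vertex v₊). Then m_T(e)/Aut_r(T) = (m_{T₋}(v₋)·n_{U₊}(v₊))/(Aut_r(T₋)·Aut_u(U₊)), where m_T(e) is the number of edges of T in the orbit of e under root-preserving automorphisms of T, m_{T₋}(v₋) is the number of vertices of T₋ in the orbit of v₋ under root-preserving automorphisms of T₋, n_{U₊}(v₊) is the number of vertices of U₊ in the orbit of v₊ under automorphisms of U₊, Aut_r denotes the number of root-preserving automorphisms, and Aut_u the number of automorphisms of an unrooted tree. -/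
/-!
An automorphism of `T` fixing the root `r` and the edge `s(a, b)` cannot swap `a` and `b`: it
preserves `T` minus the edge, so it would carry the root side `S` onto the component of `b`,
which does not contain `r`. Fixing `a` and `b`, it preserves `S` and `Sᶜ`, and since `s(a, b)` is
the only edge between them, such automorphisms are exactly the gluings of a rooted automorphism
of `T₋` fixing `a` with an automorphism of `U₊` fixing `b`. By orbit–stabilizer each of the
quotients `m/Aut` is the inverse order of a stabilizer, so the identity reduces to this
bijection of stabilizers.
-/

open SimpleGraph MulAction

namespace Sym2

instance instMulAction {G α : Type*} [Monoid G] [MulAction G α] : MulAction G (Sym2 α) where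
  smul g := Sym2.map (g • ·)
  one_smul e := by
    change Sym2.map (fun x => (1 : G) • x) e = e
    simp
  mul_smul g h e := by
    change Sym2.map (fun x => (g * h) • x) e = Sym2.map (g • ·) (Sym2.map (h • ·) e)
    simp [Sym2.map_map, mul_smul]

end Sym2

namespace MulAction

theorem mem_orbit_stabilizer_iff {G α β : Type*} [Group G] [MulAction G α] [MulAction G β]
    {r : α} {x y : β} : y ∈ orbit (stabilizer G r) x ↔ ∃ g : G, g • r = r ∧ g • x = y :=
  ⟨fun ⟨⟨g, hg⟩, h⟩ => ⟨g, hg, h⟩, fun ⟨g, hg, h⟩ => ⟨⟨g, hg⟩, h⟩⟩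

theorem card_orbit_div_card_eq_inv_card_stabilizer (G : Type*) {X : Type*} [Group G]
    [MulAction G X] [Finite X] (x : X) :
    (Nat.card (orbit G x) : ℝ) / Nat.card G = (Nat.card (stabilizer G x) : ℝ)⁻¹ := by
  have : (Nat.card (orbit G x) : ℝ) ≠ 0 := by
    have : Nonempty (orbit G x) := ⟨⟨x, mem_orbit_self x⟩⟩
    exact_mod_cast Nat.card_pos.ne'
  rw [← (stabilizer G x).card_mul_index, index_stabilizer, ← Nat.card_coe_set_eq, Nat.cast_mul]
  field_simp

end MulAction

namespace SimpleGraph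

variable {V : Type*}

theorem Iso.reachable_deleteEdges_map {G : SimpleGraph V} (f : G ≃g G) {e : Sym2 V}
    (he : f • e = e) {u v : V} (huv : (G.deleteEdges {e}).Reachable u v) :
    (G.deleteEdges {e}).Reachable (f u) (f v) := by
  refine huv.map ⟨f, fun {x y} hxy => ?_⟩
  rw [deleteEdges_adj, Set.mem_singleton_iff] at hxy ⊢
  refine ⟨f.map_adj_iff.2 hxy.1, fun h => hxy.2 ?_⟩
  rw [← smul_left_cancel_iff f, he]
  exact h

variable {T : SimpleGraph V} {r a b : V} {S : Set V}

theorem adj_iff_of_mem_of_notMem (hab : T.Adj a b)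
    (hS : S = {w | (T.deleteEdges {s(a, b)}).Reachable a w}) (hbS : b ∉ S)
    {x y : V} (hx : x ∈ S) (hy : y ∉ S) : T.Adj x y ↔ x = a ∧ y = b := by
  refine ⟨fun hxy => ?_, by rintro ⟨rfl, rfl⟩; exact hab⟩
  by_cases he : s(x, y) = s(a, b)
  · rcases Sym2.eq_iff.1 he with h | ⟨rfl, -⟩
    · exact h
    · exact absurd hx hbS
  · subst hS
    exact absurd (hx.trans (Adj.reachable (by simpa [deleteEdges_adj, hxy] using he))) hy

theorem Iso.apply_mem_iff (hS : S = {w | (T.deleteEdges {s(a, b)}).Reachable a w})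
    (f : T ≃g T) (ha : f a = a) (hb : f b = b) {x : V} : f x ∈ S ↔ x ∈ S := by
  have he : f • s(a, b) = s(a, b) := by
    change s(f a, f b) = s(a, b)
    rw [ha, hb]
  have ha' : f⁻¹ a = a := by simpa using (congrArg (f⁻¹ : T ≃g T) ha).symm
  subst hS
  refine ⟨fun h => ?_, fun h => ?_⟩
  · simpa [ha'] using f⁻¹.reachable_deleteEdges_map (inv_smul_eq_iff.2 he.symm) h
  · simpa [ha] using f.reachable_deleteEdges_map he h

theorem Iso.apply_eq_of_smul_edge_eq (hS : S = {w | (T.deleteEdges {s(a, b)}).Reachable a w})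
    (hrS : r ∈ S) (hbS : b ∉ S) (f : T ≃g T) (hr : f r = r) (he : f • s(a, b) = s(a, b)) :
    f a = a ∧ f b = b := by
  have hmk : s(f a, f b) = s(a, b) := he
  rcases Sym2.eq_iff.1 hmk with h | ⟨hfa, -⟩
  · exact h
  · subst hS
    have hbr := f.reachable_deleteEdges_map he hrS
    rw [hfa, hr] at hbr
    exact absurd (hrS.trans hbr.symm) hbS

def Iso.glue [DecidablePred (· ∈ S)] (hab : T.Adj a b)
    (hS : S = {w | (T.deleteEdges {s(a, b)}).Reachable a w}) (haS : a ∈ S) (hbS : b ∈ Sᶜ)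
    (τ : T.induce S ≃g T.induce S) (ρ : T.induce Sᶜ ≃g T.induce Sᶜ)
    (hτ : τ ⟨a, haS⟩ = ⟨a, haS⟩) (hρ : ρ ⟨b, hbS⟩ = ⟨b, hbS⟩) : T ≃g T where
  toEquiv := Equiv.Perm.subtypeCongr τ.toEquiv ρ.toEquiv
  map_rel_iff' {x y} := by
    set π := Equiv.Perm.subtypeCongr τ.toEquiv ρ.toEquiv
    have hπS {x} (hx : x ∈ S) : π x = τ ⟨x, hx⟩ := Equiv.Perm.subtypeCongr.left_apply _ _ hx
    have hπSc {x} (hx : x ∉ S) : π x = ρ ⟨x, hx⟩ := Equiv.Perm.subtypeCongr.right_apply _ _ hx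
    have hπa : π a = a := by rw [hπS haS, hτ]
    have hπb : π b = b := by rw [hπSc hbS, hρ]
    have hb : b ∉ S := hbS
    have cross {x y} (hx : x ∈ S) (hy : y ∉ S) : T.Adj (π x) (π y) ↔ T.Adj x y := by
      -- both sides say `x = a ∧ y = b`
      rw [adj_iff_of_mem_of_notMem hab hS hb hx hy, hπS hx, hπSc hy,
        adj_iff_of_mem_of_notMem hab hS hb (τ _).2 (ρ _).2, ← hπS hx, ← hπSc hy,
        π.injective.eq_iff' hπa, π.injective.eq_iff' hπb]
    by_cases hx : x ∈ S <;> by_cases hy : y ∈ S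
    · rw [hπS hx, hπS hy]
      exact τ.map_adj_iff (v := ⟨x, hx⟩) (w := ⟨y, hy⟩)
    · exact cross hx hy
    · rw [adj_comm, cross hy hx, adj_comm]
    · rw [hπSc hx, hπSc hy]
      exact ρ.map_adj_iff (v := ⟨x, hx⟩) (w := ⟨y, hy⟩)

section glue

variable [DecidablePred (· ∈ S)] (hab : T.Adj a b)
    (hS : S = {w | (T.deleteEdges {s(a, b)}).Reachable a w}) (haS : a ∈ S) (hbS : b ∈ Sᶜ)
    {τ : T.induce S ≃g T.induce S} {ρ : T.induce Sᶜ ≃g T.induce Sᶜ}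
    (hτ : τ ⟨a, haS⟩ = ⟨a, haS⟩) (hρ : ρ ⟨b, hbS⟩ = ⟨b, hbS⟩)

theorem Iso.glue_apply_of_mem {x : V} (hx : x ∈ S) :
    Iso.glue hab hS haS hbS τ ρ hτ hρ x = τ ⟨x, hx⟩ :=
  Equiv.Perm.subtypeCongr.left_apply _ _ hx

theorem Iso.glue_apply_of_notMem {x : V} (hx : x ∉ S) :
    Iso.glue hab hS haS hbS τ ρ hτ hρ x = ρ ⟨x, hx⟩ :=
  Equiv.Perm.subtypeCongr.right_apply _ _ hx

end glue

def stabilizerEdgeEquiv [DecidablePred (· ∈ S)] (hab : T.Adj a b)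
    (hS : S = {w | (T.deleteEdges {s(a, b)}).Reachable a w})
    (hrS : r ∈ S) (haS : a ∈ S) (hbS : b ∈ Sᶜ) :
    stabilizer (stabilizer (T ≃g T) r) s(a, b) ≃
      stabilizer (stabilizer (T.induce S ≃g T.induce S) (⟨r, hrS⟩ : S)) (⟨a, haS⟩ : S) ×
        stabilizer (T.induce Sᶜ ≃g T.induce Sᶜ) (⟨b, hbS⟩ : ↥Sᶜ) where
  toFun f :=
    have hfix := Iso.apply_eq_of_smul_edge_eq hS hrS hbS f.1.1 f.1.2 f.2
    have hf : ∀ x, f.1.1 x ∈ S ↔ x ∈ S := fun _ => Iso.apply_mem_iff hS _ hfix.1 hfix.2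
    (⟨⟨f.1.1.induce (f.1.1.toEquiv.bijOn hf), Subtype.ext f.1.2⟩, Subtype.ext hfix.1⟩,
      ⟨f.1.1.induce (f.1.1.toEquiv.bijOn fun x => not_congr (hf x)), Subtype.ext hfix.2⟩)
  invFun p :=
    have hτ : p.1.1.1 ⟨a, haS⟩ = ⟨a, haS⟩ := p.1.2
    have hρ : p.2.1 ⟨b, hbS⟩ = ⟨b, hbS⟩ := p.2.2
    have hτr : p.1.1.1 ⟨r, hrS⟩ = ⟨r, hrS⟩ := p.1.1.2
    ⟨⟨Iso.glue hab hS haS hbS p.1.1.1 p.2.1 hτ hρ, by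
        change Iso.glue hab hS haS hbS p.1.1.1 p.2.1 hτ hρ r = r
        rw [Iso.glue_apply_of_mem _ _ _ _ _ _ hrS, hτr]⟩, by
      change s(Iso.glue hab hS haS hbS p.1.1.1 p.2.1 hτ hρ a,
        Iso.glue hab hS haS hbS p.1.1.1 p.2.1 hτ hρ b) = s(a, b)
      rw [Iso.glue_apply_of_mem _ _ _ _ _ _ haS, Iso.glue_apply_of_notMem _ _ _ _ _ _ hbS,
        hτ, hρ]⟩
  left_inv f := by
    refine Subtype.ext (Subtype.ext (RelIso.ext fun x => ?_))
    dsimp only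
    by_cases hx : x ∈ S
    · exact Iso.glue_apply_of_mem hab hS haS hbS _ _ hx
    · exact Iso.glue_apply_of_notMem hab hS haS hbS _ _ hx
  right_inv p := by
    refine Prod.ext (Subtype.ext (Subtype.ext (RelIso.ext fun x => Subtype.ext ?_)))
      (Subtype.ext (RelIso.ext fun x => Subtype.ext ?_)) <;> dsimp only
    · exact Iso.glue_apply_of_mem hab hS haS hbS _ _ x.2
    · exact Iso.glue_apply_of_notMem hab hS haS hbS _ _ x.2

theorem card_stabilizer_edge_eq (hab : T.Adj a b)
    (hS : S = {w | (T.deleteEdges {s(a, b)}).Reachable a w})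
    (hrS : r ∈ S) (haS : a ∈ S) (hbS : b ∈ Sᶜ) :
    Nat.card (stabilizer (stabilizer (T ≃g T) r) s(a, b)) =
      Nat.card (stabilizer (stabilizer (T.induce S ≃g T.induce S) (⟨r, hrS⟩ : S))
          (⟨a, haS⟩ : S)) *
        Nat.card (stabilizer (T.induce Sᶜ ≃g T.induce Sᶜ) (⟨b, hbS⟩ : ↥Sᶜ)) := by
  classical
  rw [← Nat.card_prod]
  exact Nat.card_congr (stabilizerEdgeEquiv hab hS hrS haS hbS)

end SimpleGraph

theorem stmt4_general {V : Type} [Fintype V]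
    (T : SimpleGraph V) (r a b : V) (hab : T.Adj a b)
    (S : Set V) (hS : S = {w | (T.deleteEdges {s(a, b)}).Reachable a w})
    (hrS : r ∈ S) (haS : a ∈ S) (hbS : b ∈ Sᶜ) :
    (Nat.card {e' : Sym2 V // ∃ f : T ≃g T, f r = r ∧ Sym2.map f s(a, b) = e'} : ℝ) /
        (Nat.card {f : T ≃g T // f r = r}) =
      ((Nat.card {v : S // ∃ f : T.induce S ≃g T.induce S,
            f ⟨r, hrS⟩ = ⟨r, hrS⟩ ∧ f ⟨a, haS⟩ = v}) *
        (Nat.card {v : ↥Sᶜ // ∃ f : T.induce Sᶜ ≃g T.induce Sᶜ, f ⟨b, hbS⟩ = v}) : ℝ) /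
      ((Nat.card {f : T.induce S ≃g T.induce S // f ⟨r, hrS⟩ = ⟨r, hrS⟩}) *
        (Nat.card (T.induce Sᶜ ≃g T.induce Sᶜ))) := by
  have hedge : Nat.card {e' : Sym2 V // ∃ f : T ≃g T, f r = r ∧ Sym2.map f s(a, b) = e'} =
      Nat.card (orbit (stabilizer (T ≃g T) r) s(a, b)) :=
    Nat.card_congr <| Equiv.subtypeEquivRight fun _ =>
      (mem_orbit_stabilizer_iff (G := T ≃g T) (r := r) (x := s(a, b))).symm
  have hvertex : Nat.card {v : S // ∃ f : T.induce S ≃g T.induce S,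
        f ⟨r, hrS⟩ = ⟨r, hrS⟩ ∧ f ⟨a, haS⟩ = v} =
      Nat.card (orbit (stabilizer (T.induce S ≃g T.induce S) (⟨r, hrS⟩ : S)) (⟨a, haS⟩ : S)) :=
    Nat.card_congr (Equiv.subtypeEquivRight fun _ => mem_orbit_stabilizer_iff.symm)
  rw [hedge, hvertex, mul_div_mul_comm]
  change _ / (Nat.card (stabilizer (T ≃g T) r) : ℝ) =
    _ / (Nat.card (stabilizer (T.induce S ≃g T.induce S) (⟨r, hrS⟩ : S)) : ℝ) *
      ((Nat.card (orbit (T.induce Sᶜ ≃g T.induce Sᶜ) (⟨b, hbS⟩ : ↥Sᶜ)) : ℝ) /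
        Nat.card (T.induce Sᶜ ≃g T.induce Sᶜ))
  rw [card_orbit_div_card_eq_inv_card_stabilizer, card_orbit_div_card_eq_inv_card_stabilizer,
    card_orbit_div_card_eq_inv_card_stabilizer, card_stabilizer_edge_eq hab hS hrS haS hbS,
    Nat.cast_mul, mul_inv]

/-- Dissymmetry identity for automorphism orbit sizes: if removing the edge `{a,b}` of the
tree `T` rooted at `r` leaves the root-side component on vertex set `S` (containing `a`) and
the other component on `Sᶜ` (containing `b`), then
`m_T(e)/Aut_r(T) = m_{T₋}(v₋)·n_{U₊}(v₊)/(Aut_r(T₋)·Aut_u(U₊))`. -/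
theorem stmt4 {V : Type} [Fintype V] [DecidableEq V]
    (T : SimpleGraph V) (hT : T.IsTree) (r a b : V) (hab : T.Adj a b)
    (S : Set V) (hS : S = {w | (T.deleteEdges {s(a, b)}).Reachable a w})
    (hrS : r ∈ S) (haS : a ∈ S) (hbS : b ∈ Sᶜ) :
    (Nat.card {e' : Sym2 V // ∃ f : T ≃g T, f r = r ∧ Sym2.map f s(a, b) = e'} : ℝ) /
        (Nat.card {f : T ≃g T // f r = r}) =
      ((Nat.card {v : S // ∃ f : T.induce S ≃g T.induce S,
            f ⟨r, hrS⟩ = ⟨r, hrS⟩ ∧ f ⟨a, haS⟩ = v}) *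
        (Nat.card {v : ↥Sᶜ // ∃ f : T.induce Sᶜ ≃g T.induce Sᶜ, f ⟨b, hbS⟩ = v}) : ℝ) /
      ((Nat.card {f : T.induce S ≃g T.induce S // f ⟨r, hrS⟩ = ⟨r, hrS⟩}) *
        (Nat.card (T.induce Sᶜ ≃g T.induce Sᶜ))) :=
  stmt4_general T r a b hab S hS hrS haS hbS
end

section
/- Let 𝒢ₙ be a bridge-addable class of forests on n vertices, 𝒜ₙ its connected members (trees) and ℬₙ^U the members with exactly two components whose smallest component is isomorphic to the unrooted tree U. Then for any U of size u: u·(n − u)·|ℬₙ^U| ≤ n·|𝒜ₙ|. More generally, summing over all U of size greater than u_max: u_max·(n − u_max)·Σ_{|U| > u_max} |ℬₙ^U| ≤ n·|𝒜ₙ|. -/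
/-!
Double counting between two-component forests `G` of the class and trees `T` of the class,
relating `G` and `T` when `G` is `T` minus one edge. Bridge-addability lets `G` with a component
`S` reach at least `|S| (n - |S|)` distinct trees (one per bridge between `S` and its complement),
while a tree on `n` vertices has only `n - 1` edges to delete. Since `x ↦ x (n - x)` increases on
`[0, n/2]`, and the chosen component is the smaller one, the bound for components larger than
`u_max` follows from the same count.
-/

open SimpleGraph

/-- `S` is the vertex set of the smallest connected component of `G` (the component of
smaller size, or the one containing vertex `1`, i.e. the vertex of index `0`, on ties). -/
def IsSmallestComponent {n : ℕ} (G : SimpleGraph (Fin n)) (S : Set (Fin n)) : Prop :=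
  (∃ v : Fin n, S = {w | G.Reachable v w}) ∧
  (2 * S.ncard < n ∨ (2 * S.ncard = n ∧ ∀ i : Fin n, (i : ℕ) = 0 → i ∈ S))

open Finset

namespace SimpleGraph

variable {V : Type*} {G : SimpleGraph V} {x y : V}

lemma reachable_or_reachable_of_card_connectedComponent_eq_two
    (h2 : Nat.card G.ConnectedComponent = 2) (hxy : ¬G.Reachable x y) (z : V) :
    G.Reachable x z ∨ G.Reachable y z := by
  obtain ⟨a, b, -, hab⟩ := Nat.card_eq_two_iff.mp h2
  have hcases : ∀ c : G.ConnectedComponent, c = a ∨ c = b := fun c => by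
    have : c ∈ ({a, b} : Set _) := hab ▸ Set.mem_univ c
    simpa using this
  simp only [← ConnectedComponent.eq] at hxy ⊢
  rcases hcases (G.connectedComponentMk x) with hx | hx <;>
    rcases hcases (G.connectedComponentMk y) with hy | hy <;>
    rcases hcases (G.connectedComponentMk z) with hz | hz <;> simp_all

lemma connected_sup_edge_of_card_connectedComponent_eq_two
    (h2 : Nat.card G.ConnectedComponent = 2) (hxy : ¬G.Reachable x y) :
    (G ⊔ edge x y).Connected := by
  have hx : ∀ z, (G ⊔ edge x y).Reachable x z := by
    have hadj : (G ⊔ edge x y).Adj x y :=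
      Or.inr ((edge_adj ..).mpr ⟨Or.inl ⟨rfl, rfl⟩, fun h => hxy (h ▸ .rfl)⟩)
    intro z
    rcases reachable_or_reachable_of_card_connectedComponent_eq_two h2 hxy z with h | h
    · exact h.mono le_sup_left
    · exact hadj.reachable.trans (h.mono le_sup_left)
  have : Nonempty V := ⟨x⟩
  exact ⟨fun v w => (hx v).symm.trans (hx w)⟩

lemma deleteEdges_sup_edge (h : ¬G.Adj x y) : (G ⊔ edge x y).deleteEdges {s(x, y)} = G := by
  simp [deleteEdges_sup, h]

lemma injOn_sup_edge {S : Set V} (hS : ∀ x ∈ S, ∀ y ∉ S, ¬G.Adj x y) :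
    Set.InjOn (fun p : V × V => G ⊔ edge p.1 p.2) (S ×ˢ Sᶜ) := by
  rintro ⟨x, y⟩ ⟨hx, hy⟩ ⟨x', y'⟩ ⟨-, hy'⟩ h
  have hmem : s(x, y) ∈ (G ⊔ edge x' y').edgeSet := by
    rw [← show G ⊔ edge x y = G ⊔ edge x' y' from h]
    exact Or.inr ((edge_adj ..).mpr ⟨Or.inl ⟨rfl, rfl⟩, fun h => hy (h ▸ hx)⟩)
  have he : s(x, y) = s(x', y') :=
    edgeSet_edge_subset (show s(x, y) ∈ (edge x' y').edgeSet from
      hmem.resolve_left (hS x hx y hy))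
  rcases Sym2.eq_iff.mp he with ⟨rfl, rfl⟩ | ⟨rfl, rfl⟩
  · rfl
  · exact absurd hx hy'

def IsOneEdgeDeletion (G T : SimpleGraph V) : Prop :=
  ∃ e ∈ T.edgeSet, T.deleteEdges {e} = G

lemma ncard_isOneEdgeDeletion_le [Fintype V] (T : SimpleGraph V) [Fintype T.edgeSet] :
    {G | IsOneEdgeDeletion G T}.ncard ≤ #T.edgeFinset := by
  calc {G | IsOneEdgeDeletion G T}.ncard
      ≤ ((fun e => T.deleteEdges {e}) '' T.edgeSet).ncard := by
        refine Set.ncard_le_ncard ?_ (Set.toFinite _)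
        rintro G ⟨e, he, rfl⟩
        exact ⟨e, he, rfl⟩
    _ ≤ T.edgeSet.ncard := Set.ncard_image_le (Set.toFinite _)
    _ = #T.edgeFinset := by rw [← coe_edgeFinset, Set.ncard_coe_finset]

end SimpleGraph

section BridgeAddable

variable {n : ℕ} {𝒢 : Set (SimpleGraph (Fin n))}

lemma ncard_component_mul_le_ncard_trees (hBA : BridgeAddable 𝒢) {G : SimpleGraph (Fin n)}
    (hG : G ∈ 𝒢) (h2 : numComponents G = 2) (v : Fin n) :
    {w | G.Reachable v w}.ncard * (n - {w | G.Reachable v w}.ncard) ≤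
      {T ∈ 𝒢 | T.Connected ∧ IsOneEdgeDeletion G T}.ncard := by
  set S := {w | G.Reachable v w}
  have hsep : ∀ x ∈ S, ∀ y ∉ S, ¬G.Reachable x y := fun x hx y hy hxy => hy (hx.trans hxy)
  have hcompl : Sᶜ.ncard = n - S.ncard := by rw [Set.ncard_compl, Nat.card_fin]
  rw [← hcompl, ← Set.ncard_prod]
  refine Set.ncard_le_ncard_of_injOn _ ?_
    (injOn_sup_edge fun x hx y hy h => hsep x hx y hy h.reachable) (Set.toFinite _)
  rintro ⟨x, y⟩ ⟨hx, hy⟩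
  have hxy := hsep x hx y hy
  refine ⟨hBA G hG x y hxy, connected_sup_edge_of_card_connectedComponent_eq_two h2 hxy,
    s(x, y), Or.inr ((edge_adj ..).mpr ⟨Or.inl ⟨rfl, rfl⟩, fun h => hy (h ▸ hx)⟩),
    deleteEdges_sup_edge fun h => hxy h.reachable⟩

lemma mul_ncard_le_mul_ncard_connected (hBA : BridgeAddable 𝒢)
    (hforest : ∀ G ∈ 𝒢, G.IsAcyclic) {B : Set (SimpleGraph (Fin n))} {k : ℕ}
    (hB : ∀ G ∈ B, G ∈ 𝒢 ∧ numComponents G = 2 ∧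
      ∃ v, k ≤ {w | G.Reachable v w}.ncard * (n - {w | G.Reachable v w}.ncard)) :
    k * B.ncard ≤ n * {T ∈ 𝒢 | T.Connected}.ncard := by
  classical
  rw [mul_comm k, mul_comm n, Set.ncard_eq_toFinset_card' B, Set.ncard_eq_toFinset_card']
  refine Finset.card_mul_le_card_mul IsOneEdgeDeletion (fun G hG => ?_) (fun T hT => ?_)
  · obtain ⟨hG𝒢, h2, v, hk⟩ := hB G (Set.mem_toFinset.mp hG)
    refine hk.trans ((ncard_component_mul_le_ncard_trees hBA hG𝒢 h2 v).trans_eq ?_)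
    rw [← Set.ncard_coe_finset, Finset.coe_bipartiteAbove]
    congr 1
    ext T
    simp [and_assoc]
  · obtain ⟨hT𝒢, hTconn⟩ := Set.mem_toFinset.mp hT
    have hcard := IsTree.card_edgeFinset ⟨hTconn, hforest T hT𝒢⟩
    calc #(Finset.bipartiteBelow IsOneEdgeDeletion B.toFinset T)
        ≤ {G | IsOneEdgeDeletion G T}.ncard := by
          rw [← Set.ncard_coe_finset, Finset.coe_bipartiteBelow]
          exact Set.ncard_le_ncard (fun G hG => hG.2) (Set.toFinite _)
      _ ≤ #T.edgeFinset := ncard_isOneEdgeDeletion_le T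
      _ ≤ n := by simp only [Fintype.card_fin] at hcard; omega

end BridgeAddable

lemma Nat.mul_sub_le_mul_sub {a b n : ℕ} (hab : a ≤ b) (habn : a + b ≤ n) :
    a * (n - a) ≤ b * (n - b) := by
  zify [show a ≤ n by omega, show b ≤ n by omega]
  nlinarith [mul_nonneg (by linarith : (0 : ℤ) ≤ b - a) (by linarith : (0 : ℤ) ≤ n - a - b)]

theorem stmt8_general {n : ℕ} (𝒢 : Set (SimpleGraph (Fin n)))
    (hBA : BridgeAddable 𝒢) (hforest : ∀ G ∈ 𝒢, G.IsAcyclic)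
    (u : ℕ) (U : SimpleGraph (Fin u))
    (umax : ℕ) :
    u * (n - u) *
        {G ∈ 𝒢 | numComponents G = 2 ∧
          ∃ S : Set (Fin n), IsSmallestComponent G S ∧
            Nonempty ((G.induce S) ≃g U)}.ncard
      ≤ n * {G ∈ 𝒢 | G.Connected}.ncard ∧
    umax * (n - umax) *
        {G ∈ 𝒢 | numComponents G = 2 ∧
          ∃ S : Set (Fin n), IsSmallestComponent G S ∧ umax < S.ncard}.ncard
      ≤ n * {G ∈ 𝒢 | G.Connected}.ncard := by
  constructor
  · refine mul_ncard_le_mul_ncard_connected hBA hforest ?_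
    rintro G ⟨hG, h2, S, ⟨⟨v, rfl⟩, -⟩, ⟨e⟩⟩
    have hcard : {w | G.Reachable v w}.ncard = u := by
      rw [← Nat.card_coe_set_eq, Nat.card_congr e.toEquiv, Nat.card_fin]
    exact ⟨hG, h2, v, hcard ▸ le_rfl⟩
  · refine mul_ncard_le_mul_ncard_connected hBA hforest ?_
    rintro G ⟨hG, h2, S, ⟨⟨v, rfl⟩, hsmall⟩, hlt⟩
    have hhalf : 2 * {w | G.Reachable v w}.ncard ≤ n := by
      rcases hsmall with h | ⟨h, -⟩ <;> omega
    exact ⟨hG, h2, v, Nat.mul_sub_le_mul_sub hlt.le (by omega)⟩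

/-- For a bridge-addable class `𝒢` of forests on `n` vertices with connected members `𝒜`:
`u(n-u)|ℬ^U| ≤ n|𝒜|` for each tree `U` on `u` vertices, where `ℬ^U` consists of the
two-component members whose smallest component is isomorphic to `U`; and, summing over all
`U` with more than `u_max` vertices, `u_max(n-u_max)·Σ_{|U|>u_max}|ℬ^U| ≤ n|𝒜|`. -/
theorem stmt8 {n : ℕ} (hn : 0 < n) (𝒢 : Set (SimpleGraph (Fin n)))
    (hBA : BridgeAddable 𝒢) (hforest : ∀ G ∈ 𝒢, G.IsAcyclic)
    (u : ℕ) (hu : u ≤ n) (U : SimpleGraph (Fin u)) (hU : U.IsTree)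
    (umax : ℕ) (humax : umax ≤ n) :
    u * (n - u) *
        {G ∈ 𝒢 | numComponents G = 2 ∧
          ∃ S : Set (Fin n), IsSmallestComponent G S ∧
            Nonempty ((G.induce S) ≃g U)}.ncard
      ≤ n * {G ∈ 𝒢 | G.Connected}.ncard ∧
    umax * (n - umax) *
        {G ∈ 𝒢 | numComponents G = 2 ∧
          ∃ S : Set (Fin n), IsSmallestComponent G S ∧ umax < S.ncard}.ncard
      ≤ n * {G ∈ 𝒢 | G.Connected}.ncard :=
  stmt8_general 𝒢 hBA hforest u U umax
end

section
/- Assume that for every ε' > 0 there exists n₀ such that for every n ≥ n₀ and every bridge-addable class 𝒢ₙ of graphs on n vertices we have |𝒢ₙ^(2)| ≤ (1/2 + ε')|𝒢ₙ^(1)|. Then for all ε' > 0 and i₀ ≥ 1 there exists n₀ such that for all 1 ≤ i ≤ i₀ and n ≥ n₀ and every bridge-addable class 𝒢ₙ on n vertices: i·|𝒢ₙ^(i+1)| ≤ (1/2 + ε')·|𝒢ₙ^(i)|. -/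
open SimpleGraph

/-!
Take `G ∈ 𝒢` with `i + 1` components, a largest component `L` and one of the `i` other
components `C`, and split `G` into its restriction `H` to `W = L ∪ C` and its restriction `F`
to the complement. For fixed `(W, F)`, the graphs `H` supported on `W` with `H ⊔ F ∈ 𝒢` form a
bridge-addable class on `W`, and `|W| ≥ |L| ≥ n / (i + 1)`, so the hypothesis bounds the number
of such `H` with two components on `W` by `(1/2 + ε')` times the number of connected ones.
Every component of `F` has at most `|L| < |W|` vertices, so for a connected `H` the set `W` is
the unique largest component of `H ⊔ F`, which has `i` components; hence `(W, F, H)` can be read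
off from `H ⊔ F`. Summing over `(W, F)` gives `i |𝒢^(i+1)| ≤ (1/2 + ε') |𝒢^(i)|`.
-/

namespace Set

variable {α β : Type*} [Finite β]

lemma ncard_eq_sum_ncard_preimage_mk [Fintype α] (S : Set (α × β)) :
    S.ncard = ∑ a, (Prod.mk a ⁻¹' S).ncard := by
  rw [← Nat.card_coe_set_eq,
    Nat.card_congr (Equiv.subtypeProdEquivSigmaSubtype fun a b ↦ (a, b) ∈ S), Nat.card_sigma]
  rfl

variable [Finite α]

lemma ncard_eq_mul_ncard_of_ncard_preimage_mk {S : Set (α × β)} {A : Set α} {k : ℕ}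
    (hA : ∀ a ∈ A, (Prod.mk a ⁻¹' S).ncard = k) (hAc : ∀ a ∉ A, Prod.mk a ⁻¹' S = ∅) :
    S.ncard = k * A.ncard := by
  classical
  have := Fintype.ofFinite α
  have h (a : α) : (Prod.mk a ⁻¹' S).ncard = if a ∈ A.toFinset then k else 0 := by
    split_ifs with ha
    · exact hA a (mem_toFinset.mp ha)
    · rw [hAc a (mt mem_toFinset.mpr ha), ncard_empty]
  rw [ncard_eq_sum_ncard_preimage_mk, Finset.sum_congr rfl fun a _ ↦ h a, Finset.sum_ite_mem,
    Finset.univ_inter, Finset.sum_const, smul_eq_mul, mul_comm, ncard_eq_toFinset_card']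

lemma ncard_le_mul_ncard_of_ncard_preimage_mk_le {S T : Set (α × β)} {c : ℝ}
    (h : ∀ a, ((Prod.mk a ⁻¹' S).ncard : ℝ) ≤ c * (Prod.mk a ⁻¹' T).ncard) :
    (S.ncard : ℝ) ≤ c * T.ncard := by
  have := Fintype.ofFinite α
  rw [ncard_eq_sum_ncard_preimage_mk S, ncard_eq_sum_ncard_preimage_mk T, Nat.cast_sum,
    Nat.cast_sum, Finset.mul_sum]
  exact Finset.sum_le_sum fun a _ ↦ h a

lemma exists_embedding_fin_ncard_range_eq {V : Type*} (W : Set V) [Finite W] :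
    ∃ ι : Fin W.ncard ↪ V, range ι = W := by
  let e : W ≃ Fin W.ncard := (Finite.equivFin W).trans (finCongr (Nat.card_coe_set_eq W))
  refine ⟨e.symm.toEmbedding.trans (Function.Embedding.subtype _), ?_⟩
  ext x
  exact ⟨fun ⟨y, hy⟩ ↦ hy ▸ (e.symm y).2, fun hx ↦ ⟨e ⟨x, hx⟩, by simp⟩⟩

end Set

namespace SimpleGraph

variable {V : Type*}

lemma connectedComponentMk_supp_subset_of_adj_mem {G : SimpleGraph V} {S : Set V}
    (hS : ∀ ⦃v w⦄, G.Adj v w → v ∈ S → w ∈ S) {u : V} (hu : u ∈ S) :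
    (G.connectedComponentMk u).supp ⊆ S := by
  intro v hv
  obtain ⟨p⟩ := (ConnectedComponent.exact hv).symm
  clear hv
  induction p with
  | nil => exact hu
  | cons h _ ih => exact ih (hS h hu)

-- Components are recorded by their vertex sets, so that components of different graphs on `V`
-- can be compared.
def componentSupps (G : SimpleGraph V) (S : Set V) : Set (Set V) :=
  (fun v ↦ (G.connectedComponentMk v).supp) '' S

lemma ncard_componentSupps_univ (G : SimpleGraph V) :
    (G.componentSupps Set.univ).ncard = Nat.card G.ConnectedComponent := by
  have hrange : Set.range G.connectedComponentMk = Set.univ :=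
    Set.eq_univ_of_forall fun c ↦ c.ind fun v ↦ ⟨v, rfl⟩
  rw [componentSupps, Set.image_univ, Set.range_comp' ConnectedComponent.supp, hrange,
    Set.ncard_image_of_injective _ ConnectedComponent.supp_injective, Set.ncard_univ]

lemma connectedComponentMk_supp_subset_of_support_subset {H : SimpleGraph V} {S : Set V}
    (hH : H.support ⊆ S) {u : V} (hu : u ∈ S) : (H.connectedComponentMk u).supp ⊆ S :=
  connectedComponentMk_supp_subset_of_adj_mem (fun _ _ h _ ↦ hH ⟨_, h.symm⟩) hu

lemma disjoint_componentSupps_compl {H F : SimpleGraph V} {S : Set V} (hH : H.support ⊆ S) :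
    Disjoint (H.componentSupps S) (F.componentSupps Sᶜ) := by
  rw [Set.disjoint_left]
  rintro _ ⟨u, hu, rfl⟩ ⟨v, hv, hvu⟩
  have hvu' : (F.connectedComponentMk v).supp = (H.connectedComponentMk u).supp := hvu
  have hv' : v ∈ (H.connectedComponentMk u).supp := hvu' ▸ rfl
  exact hv (connectedComponentMk_supp_subset_of_support_subset hH hu hv')

section Components

variable {G : SimpleGraph V} {A B : Set V}

lemma componentSupps_union (G : SimpleGraph V) (S T : Set V) :
    G.componentSupps (S ∪ T) = G.componentSupps S ∪ G.componentSupps T :=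
  Set.image_union _ _ _

lemma componentSupps_univ_eq_union (G : SimpleGraph V) (S : Set V) :
    G.componentSupps Set.univ = G.componentSupps S ∪ G.componentSupps Sᶜ := by
  rw [← componentSupps_union, Set.union_compl_self]

lemma supp_mem_componentSupps_univ (c : G.ConnectedComponent) :
    c.supp ∈ G.componentSupps Set.univ :=
  c.ind fun v ↦ ⟨v, trivial, rfl⟩

lemma connectedComponentMk_supp_eq_of_mem (hA : A ∈ G.componentSupps Set.univ) {v : V}
    (hv : v ∈ A) : (G.connectedComponentMk v).supp = A := by
  obtain ⟨u, -, rfl⟩ := hA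
  exact congrArg _ hv

lemma adj_mem_of_mem_componentSupps (hA : A ∈ G.componentSupps Set.univ) :
    ∀ ⦃v w⦄, G.Adj v w → v ∈ A → w ∈ A := by
  obtain ⟨u, -, rfl⟩ := hA
  exact fun v w h hv ↦ ConnectedComponent.mem_supp_of_adj_mem_supp _ hv h

lemma adj_mem_union_of_mem_componentSupps (hA : A ∈ G.componentSupps Set.univ)
    (hB : B ∈ G.componentSupps Set.univ) : ∀ ⦃v w⦄, G.Adj v w → v ∈ A ∪ B → w ∈ A ∪ B :=
  fun _ _ h ↦ Or.imp (adj_mem_of_mem_componentSupps hA h) (adj_mem_of_mem_componentSupps hB h)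

lemma nonempty_of_mem_componentSupps (hA : A ∈ G.componentSupps Set.univ) : A.Nonempty := by
  obtain ⟨u, -, rfl⟩ := hA
  exact ConnectedComponent.nonempty_supp _

lemma componentSupps_eq_singleton (hA : A ∈ G.componentSupps Set.univ) :
    G.componentSupps A = {A} := by
  obtain ⟨u, -, rfl⟩ := hA
  refine Set.eq_singleton_iff_unique_mem.mpr ⟨⟨u, rfl, rfl⟩, ?_⟩
  rintro _ ⟨v, hv, rfl⟩
  exact congrArg _ hv

lemma disjoint_of_mem_componentSupps (hA : A ∈ G.componentSupps Set.univ)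
    (hB : B ∈ G.componentSupps Set.univ) (hAB : A ≠ B) : Disjoint A B :=
  Set.disjoint_left.mpr fun _ hvA hvB ↦ hAB <|
    (connectedComponentMk_supp_eq_of_mem hA hvA).symm.trans
      (connectedComponentMk_supp_eq_of_mem hB hvB)

lemma componentSupps_eq_singleton_of_ncard_eq_one {W : Set V} (hG : G.support ⊆ W)
    (h : (G.componentSupps W).ncard = 1) : G.componentSupps W = {W} := by
  obtain ⟨A, hA⟩ := Set.ncard_eq_one.mp h
  obtain ⟨u, hu, rfl⟩ : A ∈ G.componentSupps W := hA ▸ rfl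
  convert hA
  refine subset_antisymm (fun v hv ↦ ?_) (connectedComponentMk_supp_subset_of_support_subset hG hu)
  have hv' : (G.connectedComponentMk v).supp ∈ G.componentSupps W := ⟨v, hv, rfl⟩
  rw [hA, Set.mem_singleton_iff] at hv'
  exact hv' ▸ rfl

end Components

section Split

variable {H F : SimpleGraph V} {S : Set V}

lemma connectedComponentMk_supp_sup_left (hH : H.support ⊆ S) (hF : F.support ⊆ Sᶜ) {u : V}
    (hu : u ∈ S) : ((H ⊔ F).connectedComponentMk u).supp = (H.connectedComponentMk u).supp := by
  refine subset_antisymm (connectedComponentMk_supp_subset_of_adj_mem ?_ rfl)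
    (ConnectedComponent.connectedComponentMk_supp_subset_supp le_sup_left _ rfl)
  rintro v w (h | h) hv
  · exact (ConnectedComponent.mem_supp_congr_adj _ h).mp hv
  · exact absurd (connectedComponentMk_supp_subset_of_support_subset hH hu hv) (hF ⟨w, h⟩)

lemma connectedComponentMk_supp_sup_right (hH : H.support ⊆ S) (hF : F.support ⊆ Sᶜ) {u : V}
    (hu : u ∈ Sᶜ) : ((H ⊔ F).connectedComponentMk u).supp = (F.connectedComponentMk u).supp := by
  rw [sup_comm]
  exact connectedComponentMk_supp_sup_left hF (by rwa [compl_compl]) hu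

lemma componentSupps_sup_left (hH : H.support ⊆ S) (hF : F.support ⊆ Sᶜ) :
    (H ⊔ F).componentSupps S = H.componentSupps S :=
  Set.image_congr fun _ hu ↦ connectedComponentMk_supp_sup_left hH hF hu

lemma componentSupps_sup_right (hH : H.support ⊆ S) (hF : F.support ⊆ Sᶜ) :
    (H ⊔ F).componentSupps Sᶜ = F.componentSupps Sᶜ :=
  Set.image_congr fun _ hu ↦ connectedComponentMk_supp_sup_right hH hF hu

lemma card_connectedComponent_sup [Finite V] (hH : H.support ⊆ S) (hF : F.support ⊆ Sᶜ) :
    Nat.card (H ⊔ F).ConnectedComponent =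
      (H.componentSupps S).ncard + (F.componentSupps Sᶜ).ncard := by
  rw [← ncard_componentSupps_univ, ← Set.union_compl_self S, componentSupps, Set.image_union,
    ← componentSupps, ← componentSupps, componentSupps_sup_left hH hF,
    componentSupps_sup_right hH hF]
  exact Set.ncard_union_eq (disjoint_componentSupps_compl hH)

lemma spanningCoe_induce_adj {G : SimpleGraph V} {u v : V} :
    (G.induce S).spanningCoe.Adj u v ↔ G.Adj u v ∧ u ∈ S ∧ v ∈ S := by
  simp

lemma support_spanningCoe_induce_subset (G : SimpleGraph V) (S : Set V) :
    (G.induce S).spanningCoe.support ⊆ S :=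
  fun _ ⟨_, h⟩ ↦ (spanningCoe_induce_adj.mp h).2.1

lemma spanningCoe_induce_sup_compl {G : SimpleGraph V}
    (hS : ∀ ⦃v w⦄, G.Adj v w → v ∈ S → w ∈ S) :
    (G.induce S).spanningCoe ⊔ (G.induce Sᶜ).spanningCoe = G := by
  ext u v
  simp only [sup_adj, spanningCoe_induce_adj, Set.mem_compl_iff]
  refine ⟨fun h ↦ h.elim And.left And.left, fun h ↦ ?_⟩
  by_cases hu : u ∈ S
  · exact Or.inl ⟨h, hu, hS h hu⟩
  · exact Or.inr ⟨h, hu, fun hv ↦ hu (hS h.symm hv)⟩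

lemma spanningCoe_induce_sup_left (hH : H.support ⊆ S) (hF : F.support ⊆ Sᶜ) :
    ((H ⊔ F).induce S).spanningCoe = H := by
  ext u v
  simp only [spanningCoe_induce_adj, sup_adj]
  refine ⟨?_, fun h ↦ ⟨Or.inl h, hH ⟨v, h⟩, hH ⟨u, h.symm⟩⟩⟩
  rintro ⟨h | h, hu, -⟩
  · exact h
  · exact absurd hu (hF ⟨v, h⟩)

lemma spanningCoe_induce_sup_right (hH : H.support ⊆ S) (hF : F.support ⊆ Sᶜ) :
    ((H ⊔ F).induce Sᶜ).spanningCoe = F := by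
  rw [sup_comm]
  exact spanningCoe_induce_sup_left hF (by rwa [compl_compl])

lemma componentSupps_spanningCoe_induce {G : SimpleGraph V}
    (hS : ∀ ⦃v w⦄, G.Adj v w → v ∈ S → w ∈ S) :
    (G.induce S).spanningCoe.componentSupps S = G.componentSupps S := by
  conv_rhs => rw [← spanningCoe_induce_sup_compl hS]
  exact (componentSupps_sup_left (support_spanningCoe_induce_subset G S)
    (support_spanningCoe_induce_subset G Sᶜ)).symm

lemma componentSupps_spanningCoe_induce_compl {G : SimpleGraph V}
    (hS : ∀ ⦃v w⦄, G.Adj v w → v ∈ S → w ∈ S) :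
    (G.induce Sᶜ).spanningCoe.componentSupps Sᶜ = G.componentSupps Sᶜ := by
  conv_rhs => rw [← spanningCoe_induce_sup_compl hS]
  exact (componentSupps_sup_right (support_spanningCoe_induce_subset G S)
    (support_spanningCoe_induce_subset G Sᶜ)).symm

lemma card_connectedComponent_eq_add [Finite V] {G : SimpleGraph V}
    (hS : ∀ ⦃v w⦄, G.Adj v w → v ∈ S → w ∈ S) :
    Nat.card G.ConnectedComponent = (G.componentSupps S).ncard + (G.componentSupps Sᶜ).ncard := by
  rw [← componentSupps_spanningCoe_induce hS, ← componentSupps_spanningCoe_induce_compl hS,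
    ← card_connectedComponent_sup (support_spanningCoe_induce_subset G S)
      (support_spanningCoe_induce_subset G Sᶜ), spanningCoe_induce_sup_compl hS]

lemma reachable_sup_left_iff (hH : H.support ⊆ S) (hF : F.support ⊆ Sᶜ) {u v : V}
    (hu : u ∈ S) : (H ⊔ F).Reachable u v ↔ H.Reachable u v := by
  have := congrArg (v ∈ ·) (connectedComponentMk_supp_sup_left hH hF hu)
  simpa [ConnectedComponent.eq, reachable_comm] using this

end Split

section Map

variable {V' : Type*} (ι : V ↪ V') (K : SimpleGraph V)

lemma connectedComponentMk_supp_map (a : V) :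
    ((K.map ι).connectedComponentMk (ι a)).supp = ι '' (K.connectedComponentMk a).supp := by
  refine subset_antisymm (connectedComponentMk_supp_subset_of_adj_mem ?_ ⟨a, rfl, rfl⟩) ?_
  · rintro _ _ ⟨-, b, c, hbc, rfl, rfl⟩ ⟨b', hb', hb'b⟩
    obtain rfl := ι.injective hb'b
    exact ⟨c, (ConnectedComponent.mem_supp_congr_adj _ hbc).mp hb', rfl⟩
  · rintro _ ⟨b, hb, rfl⟩
    exact ConnectedComponent.sound ((ConnectedComponent.exact hb).map (Embedding.map ι K).toHom)

lemma reachable_map_iff {a b : V} : (K.map ι).Reachable (ι a) (ι b) ↔ K.Reachable a b := by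
  have := congrArg (ι b ∈ ·) (connectedComponentMk_supp_map ι K a)
  simpa [ConnectedComponent.eq, reachable_comm] using this

lemma componentSupps_map_range :
    (K.map ι).componentSupps (Set.range ι) = Set.image ι '' K.componentSupps Set.univ := by
  rw [componentSupps, componentSupps, ← Set.image_univ, Set.image_image, Set.image_image]
  exact Set.image_congr fun a _ ↦ connectedComponentMk_supp_map ι K a

lemma ncard_componentSupps_map_range :
    ((K.map ι).componentSupps (Set.range ι)).ncard = Nat.card K.ConnectedComponent := by
  rw [componentSupps_map_range,
    Set.ncard_image_of_injective _ (Set.image_injective.mpr ι.injective),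
    ncard_componentSupps_univ]

lemma map_sup_fromEdgeSet (a b : V) :
    (K ⊔ fromEdgeSet {s(a, b)}).map ι = K.map ι ⊔ fromEdgeSet {s(ι a, ι b)} := by
  have gc : GaloisConnection (SimpleGraph.map ι) (SimpleGraph.comap ι) := map_le_iff_le_comap ι
  rw [gc.l_sup]
  congr 1
  ext x y
  simp only [map_adj, fromEdgeSet_adj, Set.mem_singleton_iff, Sym2.eq, Sym2.rel_iff']
  aesop

lemma map_comap_of_support_subset {H : SimpleGraph V'} (hH : H.support ⊆ Set.range ι) :
    (H.comap ι).map ι = H := by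
  refine le_antisymm (map_comap_le ι H) ?_
  intro x y hxy
  obtain ⟨a, rfl⟩ := hH ⟨y, hxy⟩
  obtain ⟨b, rfl⟩ := hH ⟨_, hxy.symm⟩
  exact ⟨hxy.ne, a, b, hxy, rfl, rfl⟩

end Map


section Largest

variable [Finite V] {G : SimpleGraph V}

open Classical in
noncomputable def largestComponentSupp (G : SimpleGraph V) : Set V :=
  if h : (G.componentSupps Set.univ).Nonempty then
    (Set.exists_max_image _ Set.ncard (Set.toFinite _) h).choose
  else ∅

lemma largestComponentSupp_mem (h : (G.componentSupps Set.univ).Nonempty) :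
    G.largestComponentSupp ∈ G.componentSupps Set.univ := by
  rw [largestComponentSupp, dif_pos h]
  exact (Set.exists_max_image _ Set.ncard (Set.toFinite _) h).choose_spec.1

lemma ncard_le_ncard_largestComponentSupp {A : Set V} (hA : A ∈ G.componentSupps Set.univ) :
    A.ncard ≤ G.largestComponentSupp.ncard := by
  rw [largestComponentSupp, dif_pos ⟨A, hA⟩]
  exact (Set.exists_max_image _ Set.ncard (Set.toFinite _) ⟨A, hA⟩).choose_spec.2 A hA

lemma card_le_card_connectedComponent_mul_ncard_largestComponentSupp (G : SimpleGraph V) :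
    Nat.card V ≤ Nat.card G.ConnectedComponent * G.largestComponentSupp.ncard := by
  have := Fintype.ofFinite G.ConnectedComponent
  calc Nat.card V = (⋃ c : G.ConnectedComponent, c.supp).ncard := by
        rw [iUnion_connectedComponentSupp, Set.ncard_univ]
    _ ≤ ∑ c : G.ConnectedComponent, c.supp.ncard := Set.ncard_iUnion_le_of_fintype _
    _ ≤ ∑ _c : G.ConnectedComponent, G.largestComponentSupp.ncard :=
        Finset.sum_le_sum fun c _ ↦ ncard_le_ncard_largestComponentSupp
          (supp_mem_componentSupps_univ c)
    _ = Nat.card G.ConnectedComponent * G.largestComponentSupp.ncard := by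
        rw [Finset.sum_const, smul_eq_mul, Finset.card_univ, Nat.card_eq_fintype_card]

lemma largestComponentSupp_sup {H F : SimpleGraph V} {W : Set V} (hH : H.support ⊆ W)
    (hF : F.support ⊆ Wᶜ) (hHW : H.componentSupps W = {W})
    (hFW : ∀ A ∈ F.componentSupps Wᶜ, A.ncard < W.ncard) :
    (H ⊔ F).largestComponentSupp = W := by
  have hcomps := componentSupps_univ_eq_union (H ⊔ F) W
  rw [componentSupps_sup_left hH hF, hHW, componentSupps_sup_right hH hF] at hcomps
  have hW : W ∈ (H ⊔ F).componentSupps Set.univ := hcomps ▸ Or.inl rfl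
  rcases hcomps ▸ largestComponentSupp_mem ⟨W, hW⟩ with hL | hL
  · exact hL
  · exact absurd (ncard_le_ncard_largestComponentSupp hW) (not_le.mpr (hFW _ hL))

end Largest

end SimpleGraph

def slice {V : Type*} (𝒢 : Set (SimpleGraph V)) (W : Set V) (F : SimpleGraph V) (k : ℕ) :
    Set (SimpleGraph V) :=
  {H | H.support ⊆ W ∧ H ⊔ F ∈ 𝒢 ∧ (H.componentSupps W).ncard = k}

theorem BridgeAddable.exists_compCount_eq_ncard_slice {n : ℕ} {𝒢 : Set (SimpleGraph (Fin n))}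
    (h𝒢 : BridgeAddable 𝒢) {W : Set (Fin n)} {F : SimpleGraph (Fin n)} (hF : F.support ⊆ Wᶜ) :
    ∃ 𝒟 : Set (SimpleGraph (Fin W.ncard)), BridgeAddable 𝒟 ∧
      ∀ k, compCount 𝒟 k = (slice 𝒢 W F k).ncard := by
  obtain ⟨ι, hι⟩ := W.exists_embedding_fin_ncard_range_eq
  generalize W.ncard = m at ι ⊢
  subst hι
  have hsupp (K : SimpleGraph (Fin m)) : (K.map ι).support ⊆ Set.range ι := by
    rw [support_map]; exact Set.image_subset_range _ _
  refine ⟨{K | K.map ι ⊔ F ∈ 𝒢}, fun K hK a b hab ↦ ?_, fun k ↦ ?_⟩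
  · have hab' : ¬ (K.map ι ⊔ F).Reachable (ι a) (ι b) := by
      rwa [reachable_sup_left_iff (hsupp K) hF ⟨a, rfl⟩, reachable_map_iff]
    simpa only [Set.mem_ofPred_eq, map_sup_fromEdgeSet, sup_right_comm] using
      h𝒢 _ hK _ _ hab'
  · have : slice 𝒢 (Set.range ι) F k =
        SimpleGraph.map ι '' {K | K.map ι ⊔ F ∈ 𝒢 ∧ numComponents K = k} := by
      ext H
      constructor
      · rintro ⟨hH, hmem, hk⟩
        have hH' := map_comap_of_support_subset ι hH
        refine ⟨H.comap ι, ?_, hH'⟩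
        rw [Set.mem_ofPred_eq, numComponents, ← ncard_componentSupps_map_range ι, hH']
        exact ⟨hmem, hk⟩
      · rintro ⟨K, ⟨hmem, hk⟩, rfl⟩
        exact ⟨hsupp K, hmem, (ncard_componentSupps_map_range ι K).trans hk⟩
    rw [this, Set.ncard_image_of_injective _ (map_injective ι)]
    rfl

section Counting

variable {V : Type*} {j N : ℕ}

-- `ncard_lt` is what lets `W` be recovered from `H ⊔ F` as its largest component.
structure IsOuterPart (j N : ℕ) (W : Set V) (F : SimpleGraph V) : Prop where
  support_subset : F.support ⊆ Wᶜ
  ncard_componentSupps : (F.componentSupps Wᶜ).ncard = j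
  ncard_lt : ∀ A ∈ F.componentSupps Wᶜ, A.ncard < W.ncard
  le_ncard : N ≤ W.ncard

def splitConfigs (𝒢 : Set (SimpleGraph V)) (j N k : ℕ) :
    Set ((Set V × SimpleGraph V) × SimpleGraph V) :=
  {x | IsOuterPart j N x.1.1 x.1.2 ∧ x.2 ∈ slice 𝒢 x.1.1 x.1.2 k}

variable [Finite V] (𝒢 : Set (SimpleGraph V))

def nonLargestComponents (k : ℕ) : Set (SimpleGraph V × Set V) :=
  {p | p.1 ∈ 𝒢 ∧ Nat.card p.1.ConnectedComponent = k ∧ p.2 ∈ p.1.componentSupps Set.univ ∧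
    p.2 ≠ p.1.largestComponentSupp}

noncomputable def splitAtComponent (p : SimpleGraph V × Set V) :
    (Set V × SimpleGraph V) × SimpleGraph V :=
  let W := p.1.largestComponentSupp ∪ p.2
  ((W, (p.1.induce Wᶜ).spanningCoe), (p.1.induce W).spanningCoe)

lemma ncard_nonLargestComponents (k : ℕ) :
    (nonLargestComponents 𝒢 (k + 1)).ncard =
      k * {G ∈ 𝒢 | Nat.card G.ConnectedComponent = k + 1}.ncard := by
  refine Set.ncard_eq_mul_ncard_of_ncard_preimage_mk (fun G ⟨hG, hk⟩ ↦ ?_) fun G hG ↦ ?_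
  · have hne : (G.componentSupps Set.univ).Nonempty :=
      Set.nonempty_of_ncard_ne_zero (by rw [ncard_componentSupps_univ, hk]; omega)
    have : Prod.mk G ⁻¹' nonLargestComponents 𝒢 (k + 1) =
        G.componentSupps Set.univ \ {G.largestComponentSupp} := by
      ext C
      simp [nonLargestComponents, hG, hk]
    rw [this, Set.ncard_sdiff_singleton_of_mem (largestComponentSupp_mem hne),
      ncard_componentSupps_univ, hk, Nat.add_sub_cancel]
  · ext C
    simp only [nonLargestComponents, Set.mem_preimage, Set.mem_ofPred_eq, Set.mem_empty_iff_false,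
      iff_false]
    exact fun h ↦ hG ⟨h.1, h.2.1⟩

lemma mapsTo_splitAtComponent (hN : (j + 2) * N ≤ Nat.card V) :
    Set.MapsTo splitAtComponent (nonLargestComponents 𝒢 (j + 2)) (splitConfigs 𝒢 j N 2) := by
  rintro ⟨G, C⟩ ⟨hG, hcard, hC, hCL⟩
  dsimp only at hG hcard hC hCL
  set L := G.largestComponentSupp
  have hL : L ∈ G.componentSupps Set.univ := largestComponentSupp_mem ⟨C, hC⟩
  have hW := adj_mem_union_of_mem_componentSupps hL hC
  have hGW : G.componentSupps (L ∪ C) = {L, C} := by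
    rw [componentSupps_union, componentSupps_eq_singleton hL, componentSupps_eq_singleton hC]
    rfl
  have hLC : ({L, C} : Set (Set V)).ncard = 2 := Set.ncard_pair (Ne.symm hCL)
  have hWcard : (L ∪ C).ncard = L.ncard + C.ncard :=
    Set.ncard_union_eq (disjoint_of_mem_componentSupps hL hC (Ne.symm hCL))
  have hCpos : 0 < C.ncard := (nonempty_of_mem_componentSupps hC).ncard_pos
  have hNL : N ≤ L.ncard := by
    have := card_le_card_connectedComponent_mul_ncard_largestComponentSupp G
    rw [hcard] at this
    exact Nat.le_of_mul_le_mul_left (hN.trans this) (by omega)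
  have hFcomps : ((G.induce (L ∪ C)ᶜ).spanningCoe.componentSupps (L ∪ C)ᶜ).ncard = j := by
    have := card_connectedComponent_eq_add hW
    rw [hGW, hLC, hcard] at this
    rw [componentSupps_spanningCoe_induce_compl hW]
    omega
  have hFlt : ∀ A ∈ (G.induce (L ∪ C)ᶜ).spanningCoe.componentSupps (L ∪ C)ᶜ,
      A.ncard < (L ∪ C).ncard := by
    intro A hA
    rw [componentSupps_spanningCoe_induce_compl hW] at hA
    have hA' : A ∈ G.componentSupps Set.univ := by
      rw [componentSupps_univ_eq_union G (L ∪ C)]; exact Or.inr hA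
    have : A.ncard ≤ L.ncard := ncard_le_ncard_largestComponentSupp hA'
    omega
  have hH2 : ((G.induce (L ∪ C)).spanningCoe.componentSupps (L ∪ C)).ncard = 2 := by
    rw [componentSupps_spanningCoe_induce hW, hGW, hLC]
  have hNW : N ≤ (L ∪ C).ncard := by omega
  exact ⟨⟨support_spanningCoe_induce_subset G _, hFcomps, hFlt, hNW⟩,
    support_spanningCoe_induce_subset G _, (spanningCoe_induce_sup_compl hW).symm ▸ hG, hH2⟩

lemma injOn_splitAtComponent (k : ℕ) :
    Set.InjOn splitAtComponent (nonLargestComponents 𝒢 k) := by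
  rintro ⟨G, C⟩ ⟨-, -, hC, hCL⟩ ⟨G', C'⟩ ⟨-, -, hC', hCL'⟩ h
  dsimp only at hC hCL hC' hCL'
  simp only [splitAtComponent, Prod.mk.injEq] at h
  obtain ⟨⟨hW, hF⟩, hH⟩ := h
  have hL := largestComponentSupp_mem ⟨C, hC⟩
  have hL' := largestComponentSupp_mem ⟨C', hC'⟩
  have hG : G = G' := by
    rw [← spanningCoe_induce_sup_compl (adj_mem_union_of_mem_componentSupps hL hC),
      ← spanningCoe_induce_sup_compl (adj_mem_union_of_mem_componentSupps hL' hC'), hH, hF]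
  subst hG
  rw [← (disjoint_of_mem_componentSupps hL hC (Ne.symm hCL)).sup_sdiff_cancel_left,
    ← (disjoint_of_mem_componentSupps hL hC' (Ne.symm hCL')).sup_sdiff_cancel_left]
  exact congrArg (fun W ↦ (G, W \ G.largestComponentSupp)) hW

lemma mapsTo_sup_splitConfigs_one :
    Set.MapsTo (fun x ↦ x.2 ⊔ x.1.2) (splitConfigs 𝒢 j N 1)
      {G ∈ 𝒢 | Nat.card G.ConnectedComponent = j + 1} := by
  rintro ⟨⟨W, F⟩, H⟩ ⟨hWF, hH, hmem, h1⟩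
  dsimp only at hWF hH hmem h1 ⊢
  refine ⟨hmem, ?_⟩
  rw [card_connectedComponent_sup hH hWF.support_subset, h1, hWF.ncard_componentSupps, add_comm]

lemma injOn_sup_splitConfigs_one :
    Set.InjOn (fun x ↦ x.2 ⊔ x.1.2) (splitConfigs 𝒢 j N 1) := by
  rintro ⟨⟨W, F⟩, H⟩ ⟨hWF, hH, -, h1⟩ ⟨⟨W', F'⟩, H'⟩ ⟨hWF', hH', -, h1'⟩ h
  dsimp only at hWF hH h1 hWF' hH' h1' h
  have hW : W = W' := by
    rw [← largestComponentSupp_sup hH hWF.support_subset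
        (componentSupps_eq_singleton_of_ncard_eq_one hH h1) hWF.ncard_lt, h,
      largestComponentSupp_sup hH' hWF'.support_subset
        (componentSupps_eq_singleton_of_ncard_eq_one hH' h1') hWF'.ncard_lt]
  subst hW
  have hH'' := spanningCoe_induce_sup_left hH hWF.support_subset
  have hF'' := spanningCoe_induce_sup_right hH hWF.support_subset
  rw [h, spanningCoe_induce_sup_left hH' hWF'.support_subset] at hH''
  rw [h, spanningCoe_induce_sup_right hH' hWF'.support_subset] at hF''
  rw [hH'', hF'']

end Counting

theorem BridgeAddable.ncard_splitConfigs_two_le {n j N : ℕ} {c : ℝ}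
    {𝒢 : Set (SimpleGraph (Fin n))} (h𝒢 : BridgeAddable 𝒢)
    (hc : ∀ m, N ≤ m → ∀ 𝒟 : Set (SimpleGraph (Fin m)), BridgeAddable 𝒟 →
      (compCount 𝒟 2 : ℝ) ≤ c * compCount 𝒟 1) :
    ((splitConfigs 𝒢 j N 2).ncard : ℝ) ≤ c * (splitConfigs 𝒢 j N 1).ncard := by
  refine Set.ncard_le_mul_ncard_of_ncard_preimage_mk_le fun ⟨W, F⟩ ↦ ?_
  by_cases hWF : IsOuterPart j N W F
  · have hfiber (k : ℕ) : Prod.mk (W, F) ⁻¹' splitConfigs 𝒢 j N k = slice 𝒢 W F k := by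
      ext H
      simp [splitConfigs, hWF]
    obtain ⟨𝒟, h𝒟, hcount⟩ := h𝒢.exists_compCount_eq_ncard_slice hWF.support_subset
    rw [hfiber, hfiber, ← hcount, ← hcount]
    exact hc _ hWF.le_ncard 𝒟 h𝒟
  · have hfiber (k : ℕ) : Prod.mk (W, F) ⁻¹' splitConfigs 𝒢 j N k = ∅ := by
      ext H
      simp [splitConfigs, hWF]
    simp [hfiber]

theorem BridgeAddable.mul_compCount_le {n j N : ℕ} {c : ℝ} (hc₀ : 0 ≤ c)
    {𝒢 : Set (SimpleGraph (Fin n))} (h𝒢 : BridgeAddable 𝒢) (hN : (j + 2) * N ≤ n)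
    (hc : ∀ m, N ≤ m → ∀ 𝒟 : Set (SimpleGraph (Fin m)), BridgeAddable 𝒟 →
      (compCount 𝒟 2 : ℝ) ≤ c * compCount 𝒟 1) :
    ((j + 1 : ℕ) : ℝ) * compCount 𝒢 (j + 2) ≤ c * compCount 𝒢 (j + 1) := by
  have hN' : (j + 2) * N ≤ Nat.card (Fin n) := by rwa [Nat.card_fin]
  calc ((j + 1 : ℕ) : ℝ) * compCount 𝒢 (j + 2)
      = (nonLargestComponents 𝒢 (j + 2)).ncard := by
        rw [ncard_nonLargestComponents, Nat.cast_mul]; rfl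
    _ ≤ (splitConfigs 𝒢 j N 2).ncard := by
        exact_mod_cast Set.ncard_le_ncard_of_injOn _ (mapsTo_splitAtComponent 𝒢 hN')
          (injOn_splitAtComponent 𝒢 _)
    _ ≤ c * (splitConfigs 𝒢 j N 1).ncard := h𝒢.ncard_splitConfigs_two_le hc
    _ ≤ c * compCount 𝒢 (j + 1) := by
        gcongr
        exact Set.ncard_le_ncard_of_injOn _ (mapsTo_sup_splitConfigs_one 𝒢)
          (injOn_sup_splitConfigs_one 𝒢)

/-- Transfer principle: if `|𝒢^(2)| ≤ (1/2+ε')|𝒢^(1)|` holds asymptotically for every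
bridge-addable class, then `i·|𝒢^(i+1)| ≤ (1/2+ε')|𝒢^(i)|` holds asymptotically for
every `1 ≤ i ≤ i₀` and every bridge-addable class. -/
theorem stmt9
    (H : ∀ ε' : ℝ, 0 < ε' → ∃ n₀ : ℕ, ∀ n : ℕ, n₀ ≤ n →
      ∀ 𝒢 : Set (SimpleGraph (Fin n)), BridgeAddable 𝒢 →
        (compCount 𝒢 2 : ℝ) ≤ (1/2 + ε') * compCount 𝒢 1) :
    ∀ ε' : ℝ, 0 < ε' → ∀ i₀ : ℕ, 1 ≤ i₀ → ∃ n₀ : ℕ,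
      ∀ i : ℕ, 1 ≤ i → i ≤ i₀ → ∀ n : ℕ, n₀ ≤ n →
        ∀ 𝒢 : Set (SimpleGraph (Fin n)), BridgeAddable 𝒢 →
          (i : ℝ) * compCount 𝒢 (i + 1) ≤ (1/2 + ε') * compCount 𝒢 i := by
  intro ε hε i₀ _
  obtain ⟨N, hN⟩ := H ε hε
  refine ⟨(i₀ + 1) * N, fun i hi hii₀ n hn 𝒢 h𝒢 ↦ ?_⟩
  obtain ⟨j, rfl⟩ : ∃ j, i = j + 1 := ⟨i - 1, by omega⟩
  exact h𝒢.mul_compCount_le (by linarith)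
    ((Nat.mul_le_mul_right N (by omega)).trans hn) hN
end

section
/- Let (a_T) be nonnegative reals indexed by labeled trees T (on initial segments of ℕ), invariant under relabeling, and supermultiplicative in the sense that for any labeled tree U with a marked edge e splitting U into components T₁, T₂, one has a_U ≥ a_{T₁}·a_{T₂}. Define Y = Σ_{T rooted labeled tree} a_T/|T|! and Y^u = Σ_{U labeled tree} a_U/|U|!, and suppose Y < ∞. Then Y − Y^u ≥ (1/2)·Y², and consequently Y^u ≤ 1/2. -/
/-!
Let `f n` be the total weight of the labelled trees on `n` vertices, so that
`Y = ∑ n, n f n / n!` and `Y^u = ∑ n, f n / n!`. Gluing a rooted tree on a label set `S`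
to a rooted tree on `Sᶜ` by an edge between the two roots is injective (deleting the marked
edge recovers `S` as the side of the first root, then both trees), and supermultiplicativity
bounds the product of the two weights by the weight of the glued, edge-marked tree. Since a
tree on `n` vertices has `2 (n - 1)` oriented edges, summing over `S` gives
`∑_{k + l = n} C(n, k) (k f k) (l f l) ≤ 2 (n - 1) f n`. After division by `n!` this is a
coefficientwise inequality between exponential generating functions, and the Cauchy product
turns it into `Y² ≤ 2 (Y - Y^u)`. Finally `Y^u ≤ Y - Y² / 2 ≤ 1 / 2`.
-/

open Finset SimpleGraph
open scoped Classical

namespace Finset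

theorem sum_le_sum_of_injOn {ι κ M : Type*} [AddCommMonoid M] [PartialOrder M]
    [IsOrderedAddMonoid M] {s : Finset ι} {t : Finset κ} {f : ι → M} {g : κ → M} (e : ι → κ)
    (he : Set.InjOn e s) (hst : Set.MapsTo e s t) (hfg : ∀ i ∈ s, f i ≤ g (e i))
    (hg : ∀ j ∈ t, 0 ≤ g j) : ∑ i ∈ s, f i ≤ ∑ j ∈ t, g j :=
  calc ∑ i ∈ s, f i ≤ ∑ i ∈ s, g (e i) := sum_le_sum hfg
    _ = ∑ j ∈ s.image e, g j := (sum_image he).symm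
    _ ≤ ∑ j ∈ t, g j :=
      sum_le_sum_of_subset_of_nonneg (image_subset_iff.2 hst) fun j hj _ => hg j hj

variable {α : Type*} [Fintype α] [DecidableEq α]

noncomputable def sumComplFinEquiv (S : Finset α) : Fin #S ⊕ Fin #Sᶜ ≃ α :=
  (Equiv.sumCongr S.equivFin.symm
    (Sᶜ.equivFin.symm.trans (Equiv.subtypeEquivRight fun _ => mem_compl))).trans
    (Equiv.sumCompl (· ∈ S))

theorem image_sumComplFinEquiv_range_inl (S : Finset α) :
    S.sumComplFinEquiv '' Set.range Sum.inl = S := by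
  ext u
  constructor
  · rintro ⟨_, ⟨i, rfl⟩, rfl⟩
    simp [sumComplFinEquiv]
  · intro hu
    exact ⟨.inl (S.equivFin ⟨u, hu⟩), ⟨_, rfl⟩, by simp [sumComplFinEquiv]⟩

end Finset

open Nat in
theorem sum_mul_compl_card_div_factorial (g : ℕ → ℝ) (n : ℕ) :
    (∑ S : Finset (Fin n), g #S * g #Sᶜ) / n ! =
      ∑ kl ∈ antidiagonal n, g kl.1 / kl.1 ! * (g kl.2 / kl.2 !) := by
  simp_rw [card_compl, Fintype.card_fin]
  rw [← powerset_univ, sum_powerset_apply_card (fun k => g k * g (n - k)), Finset.card_univ,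
    Fintype.card_fin, sum_div,
    Nat.sum_antidiagonal_eq_sum_range_succ fun k l => g k / k ! * (g l / l !)]
  refine sum_congr rfl fun k hk => ?_
  rw [nsmul_eq_mul, Nat.cast_choose ℝ (Nat.le_of_lt_succ (mem_range.1 hk))]
  field_simp

theorem sq_tsum_le_tsum_of_sum_antidiagonal_le {t v : ℕ → ℝ} (ht : ∀ n, 0 ≤ t n)
    (hts : Summable t) (hv : Summable v)
    (h : ∀ n, ∑ kl ∈ antidiagonal n, t kl.1 * t kl.2 ≤ v n) :
    (∑' n, t n) ^ 2 ≤ ∑' n, v n := by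
  have hnorm : Summable (‖t ·‖) := hts.congr fun n => (Real.norm_of_nonneg (ht n)).symm
  rw [sq, tsum_mul_tsum_eq_tsum_sum_antidiagonal_of_summable_norm hnorm hnorm]
  exact (summable_norm_sum_mul_antidiagonal_of_summable_norm hnorm hnorm).of_norm.tsum_le_tsum
    h hv

theorem half_sq_tsum_le_tsum_sub_tsum_and_tsum_le_half {t u : ℕ → ℝ} (ht : ∀ n, 0 ≤ t n)
    (hu : ∀ n, 0 ≤ u n) (hts : Summable t)
    (h : ∀ n, ∑ kl ∈ antidiagonal n, t kl.1 * t kl.2 ≤ 2 * (t n - u n)) :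
    1 / 2 * (∑' n, t n) ^ 2 ≤ ∑' n, t n - ∑' n, u n ∧ ∑' n, u n ≤ 1 / 2 := by
  have hut : ∀ n, u n ≤ t n := fun n => by
    have := (sum_nonneg fun kl _ => mul_nonneg (ht kl.1) (ht kl.2)).trans (h n)
    linarith
  have hus : Summable u := hts.of_nonneg_of_le hu hut
  have hsq := sq_tsum_le_tsum_of_sum_antidiagonal_le ht hts ((hts.sub hus).mul_left 2) h
  rw [tsum_mul_left, hts.tsum_sub hus] at hsq
  constructor
  · linarith
  · nlinarith [sq_nonneg (∑' n, t n - 1)]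

namespace SimpleGraph

variable {V W V' : Type*} {G : SimpleGraph V} {H : SimpleGraph W} {G' : SimpleGraph V'}

theorem IsTree.sum_sup_edge [Finite V] [Finite W] (hG : G.IsTree) (hH : H.IsTree)
    (v : V) (w : W) :
    (G.sum H ⊔ edge (.inl v) (.inr w)).IsTree := by
  rw [isTree_iff_connected_and_card] at *
  refine ⟨hG.1.sum_sup_edge hH.1, ?_⟩
  have hnotMem : s(.inl v, .inr w) ∉ (G ⊕g H).edgeSet :=
    not_adj_sum_inl_inr (G := G) (H := H) v w
  rw [edgeSet_sup, edgeSet_edge_of_ne Sum.inl_ne_inr, Set.union_singleton,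
    Nat.card_coe_set_eq, Set.ncard_insert_of_notMem hnotMem (Set.toFinite _),
    ← Nat.card_coe_set_eq, Nat.card_congr edgeSetSumEquiv, Nat.card_sum, Nat.card_sum]
  omega

theorem sum_sup_edge_adj_inl {v w : V} {v₀ : V} {w₀ : W} :
    (G.sum H ⊔ edge (.inl v₀) (.inr w₀)).Adj (.inl v) (.inl w) ↔ G.Adj v w := by
  simp [edge_adj]

theorem sum_sup_edge_adj_inr {v w : W} {v₀ : V} {w₀ : W} :
    (G.sum H ⊔ edge (.inl v₀) (.inr w₀)).Adj (.inr v) (.inr w) ↔ H.Adj v w := by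
  simp [edge_adj]

theorem sum_sup_edge_deleteEdges (v : V) (w : W) :
    (G.sum H ⊔ edge (.inl v) (.inr w)).deleteEdges {s(.inl v, .inr w)} = G ⊕g H := by
  ext (x | x) (y | y) <;> simp

theorem setOf_reachable_sum_inl (hG : G.Preconnected) (v : V) :
    {u | (G ⊕g H).Reachable (.inl v) u} = Set.range Sum.inl := by
  ext (u | u)
  · simpa using (hG v u).map Embedding.sumInl.toHom
  · simpa using not_reachable_sum_inl_inr v u

theorem setOf_reachable_sum_inr (hH : H.Preconnected) (w : W) :
    {u | (G ⊕g H).Reachable (.inr w) u} = Set.range Sum.inr := by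
  ext (u | u)
  · simpa [reachable_comm] using not_reachable_sum_inl_inr (G := G) (H := H) u w
  · simpa using (hH w u).map Embedding.sumInr.toHom

theorem IsTree.card_filter_adj [Fintype V] (hG : G.IsTree) :
    (#{p : V × V | G.Adj p.1 p.2} : ℝ) = 2 * (Fintype.card V - 1) := by
  have h : #{p : V × V | G.Adj p.1 p.2} = 2 * #G.edgeFinset := (G.two_mul_card_edgeFinset).symm
  rw [h]
  push_cast
  linarith [show (#G.edgeFinset : ℝ) + 1 = Fintype.card V by exact_mod_cast hG.card_edgeFinset]

namespace Iso

variable (φ : G ≃g G')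

def deleteEdges (s : Set (Sym2 V)) : G.deleteEdges s ≃g G'.deleteEdges (Sym2.map φ '' s) where
  toEquiv := φ.toEquiv
  map_rel_iff' {a b} := by
    rw [deleteEdges_adj, deleteEdges_adj]
    change G'.Adj (φ a) (φ b) ∧ s(φ a, φ b) ∉ Sym2.map φ '' s ↔ _
    rw [← Sym2.map_mk, (Sym2.map.injective φ.injective).mem_set_image, φ.map_adj_iff]

@[simp]
theorem coe_deleteEdges (s : Set (Sym2 V)) : ⇑(φ.deleteEdges s) = φ := rfl

theorem image_setOf_reachable (x : V) :
    φ '' {w | G.Reachable x w} = {w | G'.Reachable (φ x) w} := by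
  ext w
  obtain ⟨w, rfl⟩ := φ.surjective w
  simp [φ.injective.mem_set_image, φ.reachable_iff]

theorem image_setOf_reachable_deleteEdges (x y z : V) :
    φ '' {w | (G.deleteEdges {s(x, y)}).Reachable z w} =
      {w | (G'.deleteEdges {s(φ x, φ y)}).Reachable (φ z) w} := by
  simpa using (φ.deleteEdges {s(x, y)}).image_setOf_reachable z

end Iso

section SumSupEdge

variable {T₁ : SimpleGraph V} {T₂ : SimpleGraph W} {r₁ : V} {r₂ : W}
  (ψ : T₁.sum T₂ ⊔ edge (.inl r₁) (.inr r₂) ≃g G')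

noncomputable def induceRangeInlIso :
    (T₁.sum T₂ ⊔ edge (.inl r₁) (.inr r₂)).induce (Set.range Sum.inl) ≃g T₁ :=
  (Embedding.isoInduceRange ⟨Function.Embedding.inl, sum_sup_edge_adj_inl⟩).symm

noncomputable def induceRangeInrIso :
    (T₁.sum T₂ ⊔ edge (.inl r₁) (.inr r₂)).induce (Set.range Sum.inr) ≃g T₂ :=
  (Embedding.isoInduceRange ⟨Function.Embedding.inr, sum_sup_edge_adj_inr⟩).symm

theorem Iso.setOf_reachable_deleteEdges_inl (hT₁ : T₁.Preconnected) :
    {w | (G'.deleteEdges {s(ψ (.inl r₁), ψ (.inr r₂))}).Reachable (ψ (.inl r₁)) w} =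
      ψ '' Set.range Sum.inl := by
  rw [← ψ.image_setOf_reachable_deleteEdges, sum_sup_edge_deleteEdges,
    setOf_reachable_sum_inl hT₁]

theorem Iso.setOf_reachable_deleteEdges_inr (hT₂ : T₂.Preconnected) :
    {w | (G'.deleteEdges {s(ψ (.inl r₁), ψ (.inr r₂))}).Reachable (ψ (.inr r₂)) w} =
      ψ '' Set.range Sum.inr := by
  rw [← ψ.image_setOf_reachable_deleteEdges, sum_sup_edge_deleteEdges,
    setOf_reachable_sum_inr hT₂]

theorem Iso.nonempty_induce_setOf_reachable_deleteEdges_inl (hT₁ : T₁.Preconnected) :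
    Nonempty (G'.induce {w | (G'.deleteEdges {s(ψ (.inl r₁), ψ (.inr r₂))}).Reachable
      (ψ (.inl r₁)) w} ≃g T₁) := by
  rw [ψ.setOf_reachable_deleteEdges_inl hT₁]
  exact ⟨(ψ.induce ψ.injective.injOn.bijOn_image).symm.trans induceRangeInlIso⟩

theorem Iso.nonempty_induce_setOf_reachable_deleteEdges_inr (hT₂ : T₂.Preconnected) :
    Nonempty (G'.induce {w | (G'.deleteEdges {s(ψ (.inl r₁), ψ (.inr r₂))}).Reachable
      (ψ (.inr r₂)) w} ≃g T₂) := by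
  rw [ψ.setOf_reachable_deleteEdges_inr hT₂]
  exact ⟨(ψ.induce ψ.injective.injOn.bijOn_image).symm.trans induceRangeInrIso⟩

end SumSupEdge

end SimpleGraph

section MarkedJoin

abbrev RootedPairOnSplit (α : Type*) [Fintype α] [DecidableEq α] :=
  Σ S : Finset α, (SimpleGraph (Fin #S) × Fin #S) × (SimpleGraph (Fin #Sᶜ) × Fin #Sᶜ)

variable {α : Type*} [Fintype α] [DecidableEq α]

noncomputable def markedJoin (j : RootedPairOnSplit α) : SimpleGraph α × α × α :=
  let e := j.1.sumComplFinEquiv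
  ((j.2.1.1.sum j.2.2.1 ⊔ edge (.inl j.2.1.2) (.inr j.2.2.2)).map e.toEmbedding,
    e (.inl j.2.1.2), e (.inr j.2.2.2))

noncomputable def markedJoinIso (j : RootedPairOnSplit α) :
    j.2.1.1.sum j.2.2.1 ⊔ edge (.inl j.2.1.2) (.inr j.2.2.2) ≃g (markedJoin j).1 :=
  Iso.map _ _

variable {j : RootedPairOnSplit α}

theorem isTree_markedJoin (h₁ : j.2.1.1.IsTree) (h₂ : j.2.2.1.IsTree) :
    (markedJoin j).1.IsTree :=
  (markedJoinIso j).isTree_iff.mp (h₁.sum_sup_edge h₂ _ _)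

theorem adj_markedJoin : (markedJoin j).1.Adj (markedJoin j).2.1 (markedJoin j).2.2 :=
  ((markedJoinIso j).map_adj_iff (v := .inl _) (w := .inr _)).mpr (by simp [edge_adj])

theorem setOf_reachable_markedJoin (h₁ : j.2.1.1.Preconnected) :
    {w | ((markedJoin j).1.deleteEdges {s((markedJoin j).2.1, (markedJoin j).2.2)}).Reachable
      (markedJoin j).2.1 w} = j.1 := by
  rw [← j.1.image_sumComplFinEquiv_range_inl]
  exact (markedJoinIso j).setOf_reachable_deleteEdges_inl h₁

theorem markedJoin_injOn : Set.InjOn (markedJoin (α := α)) {j | j.2.1.1.Preconnected} := by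
  intro j hj j' hj' heq
  have hS : (j.1 : Set α) = j'.1 := by
    rw [← setOf_reachable_markedJoin hj, ← setOf_reachable_markedJoin hj', heq]
  obtain ⟨S, ⟨T₁, r₁⟩, T₂, r₂⟩ := j
  obtain ⟨S', ⟨T₁', r₁'⟩, T₂', r₂'⟩ := j'
  obtain rfl : S = S' := coe_injective hS
  simp only [markedJoin, Prod.mk.injEq, EmbeddingLike.apply_eq_iff_eq, Sum.inl.injEq,
    Sum.inr.injEq] at heq
  obtain ⟨hJ, rfl, rfl⟩ := heq
  have hJ := map_injective _ hJ
  obtain rfl : T₁ = T₁' := by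
    ext u v
    rw [← sum_sup_edge_adj_inl (H := T₂) (v₀ := r₁) (w₀ := r₂), hJ, sum_sup_edge_adj_inl]
  obtain rfl : T₂ = T₂' := by
    ext u v
    rw [← sum_sup_edge_adj_inr (G := T₁) (v₀ := r₁) (w₀ := r₂), hJ, sum_sup_edge_adj_inr]
  rfl

end MarkedJoin

section Weights

open Nat

variable (a : (m : ℕ) → SimpleGraph (Fin m) → ℝ)

def IsSupermultiplicative : Prop :=
  ∀ (m₁ m₂ : ℕ) (T₁ : SimpleGraph (Fin m₁)) (T₂ : SimpleGraph (Fin m₂))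
    (W : SimpleGraph (Fin (m₁ + m₂))) (x y : Fin (m₁ + m₂)),
    W.IsTree → W.Adj x y →
    Nonempty ((W.induce {w | (W.deleteEdges {s(x, y)}).Reachable x w}) ≃g T₁) →
    Nonempty ((W.induce {w | (W.deleteEdges {s(x, y)}).Reachable y w}) ≃g T₂) →
    a m₁ T₁ * a m₂ T₂ ≤ a (m₁ + m₂) W

noncomputable def rootedTreeWeight (n : ℕ) : ℝ :=
  ∑ p : SimpleGraph (Fin n) × Fin n, if p.1.IsTree then a n p.1 else 0

noncomputable def edgeMarkedTreeWeight (n : ℕ) : ℝ :=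
  ∑ p : SimpleGraph (Fin n) × Fin n × Fin n,
    if p.1.IsTree ∧ p.1.Adj p.2.1 p.2.2 then a n p.1 else 0

noncomputable def rootedTreeTerm (n : ℕ) : ℝ :=
  ∑ G : SimpleGraph (Fin n), if G.IsTree then (n : ℝ) * a n G / n ! else 0

noncomputable def treeTerm (n : ℕ) : ℝ :=
  ∑ G : SimpleGraph (Fin n), if G.IsTree then a n G / n ! else 0

variable {a}

theorem IsSupermultiplicative.mul_le_of_iso (ha : IsSupermultiplicative a) {m₁ m₂ n : ℕ}
    (hn : m₁ + m₂ = n) {T₁ : SimpleGraph (Fin m₁)} {T₂ : SimpleGraph (Fin m₂)}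
    (hT₁ : T₁.IsTree) (hT₂ : T₂.IsTree) {r₁ : Fin m₁} {r₂ : Fin m₂} {W : SimpleGraph (Fin n)}
    (ψ : T₁.sum T₂ ⊔ edge (.inl r₁) (.inr r₂) ≃g W) : a m₁ T₁ * a m₂ T₂ ≤ a n W := by
  subst hn
  exact ha m₁ m₂ T₁ T₂ W _ _ (ψ.isTree_iff.mp (hT₁.sum_sup_edge hT₂ r₁ r₂))
    ((ψ.map_adj_iff (v := .inl _) (w := .inr _)).mpr (by simp [edge_adj]))
    (ψ.nonempty_induce_setOf_reachable_deleteEdges_inl hT₁.connected.preconnected)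
    (ψ.nonempty_induce_setOf_reachable_deleteEdges_inr hT₂.connected.preconnected)

theorem sum_mul_rootedTreeWeight_le (ha : IsSupermultiplicative a) (hnn : ∀ m G, 0 ≤ a m G)
    (n : ℕ) :
    ∑ S : Finset (Fin n), rootedTreeWeight a #S * rootedTreeWeight a #Sᶜ ≤
      edgeMarkedTreeWeight a n := by
  have hsplit : ∑ S : Finset (Fin n), rootedTreeWeight a #S * rootedTreeWeight a #Sᶜ =
      ∑ j : RootedPairOnSplit (Fin n),
        if j.2.1.1.IsTree ∧ j.2.2.1.IsTree then a _ j.2.1.1 * a _ j.2.2.1 else 0 := by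
    rw [Fintype.sum_sigma]
    refine sum_congr rfl fun S _ => ?_
    rw [rootedTreeWeight, rootedTreeWeight, sum_mul_sum, ← Fintype.sum_prod_type']
    simp only [ite_zero_mul_ite_zero]
  rw [hsplit, ← sum_filter, edgeMarkedTreeWeight, ← sum_filter]
  refine sum_le_sum_of_injOn markedJoin (markedJoin_injOn.mono ?_) ?_ ?_ fun p _ => hnn _ _
  · intro j hj
    exact (mem_filter.1 hj).2.1.connected.preconnected
  · intro j hj
    obtain ⟨h₁, h₂⟩ := (mem_filter.1 hj).2
    exact mem_filter.2 ⟨mem_univ _, isTree_markedJoin h₁ h₂, adj_markedJoin⟩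
  · intro j hj
    obtain ⟨h₁, h₂⟩ := (mem_filter.1 hj).2
    exact ha.mul_le_of_iso (by simp [card_add_card_compl]) h₁ h₂ (markedJoinIso j)

theorem rootedTreeWeight_eq (n : ℕ) :
    rootedTreeWeight a n = ∑ G : SimpleGraph (Fin n), if G.IsTree then (n : ℝ) * a n G else 0 := by
  rw [rootedTreeWeight, Fintype.sum_prod_type]
  refine sum_congr rfl fun G _ => ?_
  simp only [sum_const, Finset.card_fin, nsmul_eq_mul, mul_ite, mul_zero]

theorem edgeMarkedTreeWeight_eq (n : ℕ) :
    edgeMarkedTreeWeight a n =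
      ∑ G : SimpleGraph (Fin n), if G.IsTree then 2 * ((n : ℝ) - 1) * a n G else 0 := by
  rw [edgeMarkedTreeWeight, Fintype.sum_prod_type]
  refine sum_congr rfl fun G _ => ?_
  split_ifs with hG
  · simp only [hG, true_and]
    rw [← sum_filter, sum_const, nsmul_eq_mul, hG.card_filter_adj, Fintype.card_fin]
  · simp [hG]

theorem rootedTreeTerm_eq (n : ℕ) : rootedTreeTerm a n = rootedTreeWeight a n / n ! := by
  rw [rootedTreeWeight_eq, sum_div, rootedTreeTerm]
  refine sum_congr rfl fun G _ => ?_
  rw [ite_div, zero_div]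

theorem two_mul_rootedTreeTerm_sub_treeTerm (n : ℕ) :
    2 * (rootedTreeTerm a n - treeTerm a n) = edgeMarkedTreeWeight a n / n ! := by
  rw [edgeMarkedTreeWeight_eq, sum_div, rootedTreeTerm, treeTerm, ← sum_sub_distrib, mul_sum]
  refine sum_congr rfl fun G _ => ?_
  split_ifs <;> ring

theorem rootedTreeTerm_nonneg (hnn : ∀ m G, 0 ≤ a m G) (n : ℕ) : 0 ≤ rootedTreeTerm a n := by
  refine sum_nonneg fun G _ => ?_
  split_ifs
  · exact div_nonneg (mul_nonneg n.cast_nonneg (hnn n G)) n.factorial.cast_nonneg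
  · exact le_rfl

theorem treeTerm_nonneg (hnn : ∀ m G, 0 ≤ a m G) (n : ℕ) : 0 ≤ treeTerm a n := by
  refine sum_nonneg fun G _ => ?_
  split_ifs
  · exact div_nonneg (hnn n G) n.factorial.cast_nonneg
  · exact le_rfl

theorem sum_antidiagonal_rootedTreeTerm_le (ha : IsSupermultiplicative a)
    (hnn : ∀ m G, 0 ≤ a m G) (n : ℕ) :
    ∑ kl ∈ antidiagonal n, rootedTreeTerm a kl.1 * rootedTreeTerm a kl.2 ≤
      2 * (rootedTreeTerm a n - treeTerm a n) := by
  rw [two_mul_rootedTreeTerm_sub_treeTerm]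
  simp only [rootedTreeTerm_eq]
  rw [← sum_mul_compl_card_div_factorial]
  gcongr
  exact sum_mul_rootedTreeWeight_le ha hnn n

end Weights

theorem stmt13_general
    (a : (m : ℕ) → SimpleGraph (Fin m) → ℝ)
    (hnn : ∀ m G, 0 ≤ a m G)
    (hsuper : ∀ (m₁ m₂ : ℕ) (T₁ : SimpleGraph (Fin m₁)) (T₂ : SimpleGraph (Fin m₂))
        (W : SimpleGraph (Fin (m₁ + m₂))) (x y : Fin (m₁ + m₂)),
      W.IsTree → W.Adj x y →
      Nonempty ((W.induce {w | (W.deleteEdges {s(x, y)}).Reachable x w}) ≃g T₁) →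
      Nonempty ((W.induce {w | (W.deleteEdges {s(x, y)}).Reachable y w}) ≃g T₂) →
      a m₁ T₁ * a m₂ T₂ ≤ a (m₁ + m₂) W)
    (hsum : Summable (fun m : ℕ => ∑ G : SimpleGraph (Fin m),
      if G.IsTree then (m : ℝ) * a m G / (Nat.factorial m) else 0)) :
    (1/2) * (∑' m : ℕ, ∑ G : SimpleGraph (Fin m),
        if G.IsTree then (m : ℝ) * a m G / (Nat.factorial m) else 0) ^ 2
      ≤ (∑' m : ℕ, ∑ G : SimpleGraph (Fin m),
          if G.IsTree then (m : ℝ) * a m G / (Nat.factorial m) else 0)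
        - (∑' m : ℕ, ∑ G : SimpleGraph (Fin m),
            if G.IsTree then a m G / (Nat.factorial m) else 0) ∧
    (∑' m : ℕ, ∑ G : SimpleGraph (Fin m),
        if G.IsTree then a m G / (Nat.factorial m) else 0) ≤ 1/2 :=
  half_sq_tsum_le_tsum_sub_tsum_and_tsum_le_half (rootedTreeTerm_nonneg hnn)
    (treeTerm_nonneg hnn) hsum (sum_antidiagonal_rootedTreeTerm_le hsuper hnn)

/-- Supermultiplicative dissymmetry theorem: for nonnegative, relabeling-invariant,
supermultiplicative weights `a` on labeled trees, if the rooted partition function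
`Y = Σ_T |T|·a_T/|T|!` (summing over labeled trees) converges, then
`Y - Y^u ≥ (1/2)Y²` and hence `Y^u ≤ 1/2`, where `Y^u = Σ_T a_T/|T|!`. -/
theorem stmt13
    (a : (m : ℕ) → SimpleGraph (Fin m) → ℝ)
    (hnn : ∀ m G, 0 ≤ a m G)
    (hinv : ∀ m (G G' : SimpleGraph (Fin m)), Nonempty (G ≃g G') → a m G = a m G')
    (hsuper : ∀ (m₁ m₂ : ℕ) (T₁ : SimpleGraph (Fin m₁)) (T₂ : SimpleGraph (Fin m₂))
        (W : SimpleGraph (Fin (m₁ + m₂))) (x y : Fin (m₁ + m₂)),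
      W.IsTree → W.Adj x y →
      Nonempty ((W.induce {w | (W.deleteEdges {s(x, y)}).Reachable x w}) ≃g T₁) →
      Nonempty ((W.induce {w | (W.deleteEdges {s(x, y)}).Reachable y w}) ≃g T₂) →
      a m₁ T₁ * a m₂ T₂ ≤ a (m₁ + m₂) W)
    (hsum : Summable (fun m : ℕ => ∑ G : SimpleGraph (Fin m),
      if G.IsTree then (m : ℝ) * a m G / (Nat.factorial m) else 0)) :
    (1/2) * (∑' m : ℕ, ∑ G : SimpleGraph (Fin m),
        if G.IsTree then (m : ℝ) * a m G / (Nat.factorial m) else 0) ^ 2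
      ≤ (∑' m : ℕ, ∑ G : SimpleGraph (Fin m),
          if G.IsTree then (m : ℝ) * a m G / (Nat.factorial m) else 0)
        - (∑' m : ℕ, ∑ G : SimpleGraph (Fin m),
            if G.IsTree then a m G / (Nat.factorial m) else 0) ∧
    (∑' m : ℕ, ∑ G : SimpleGraph (Fin m),
        if G.IsTree then a m G / (Nat.factorial m) else 0) ≤ 1/2 :=
  stmt13_general a hnn hsuper hsum
end

section
/- For d ≥ 1 and integers w, q ≥ 1 with w + 2q ≤ n, the set Γ₀ = {β ∈ {0,...,n−1}ᵈ : ∃ coordinate j and integer k ≥ 1 with k(w+2q) − 2q ≤ βⱼ < k(w+2q)} has complement of size at least w^d·(n/(w+2q) − 1)^d ≥ (1 − (w+2q)/n)^d·(1 + 2q/w)^{−d}·n^d; moreover the complement is a disjoint union of K = (⌊n/(w+2q)⌋)ᵈ-type axis-parallel boxes of width w that are pairwise at L^∞-distance greater than 2q. -/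
/-!
Write `s = w + 2q`. Whether `β ∈ Γ₀` depends only on the residues `βⱼ mod s`: `β ∉ Γ₀` iff every
`βⱼ mod s` is `< w`, i.e. iff every `βⱼ` lies in a block `[κⱼ s, κⱼ s + w)`. Hence the complement
is the `d`-th power of a one-dimensional set containing the `⌊n/s⌋` complete blocks of `w` points,
and `⌊n/s⌋ ≥ n/s - 1`. The `q`-neighbourhoods of blocks with different `κⱼ` are disjoint because
consecutive blocks start `s = w + 2q` apart.
-/

open Finset

namespace Nat

theorem exists_mul_add_le_lt_iff {p a b x : ℕ} (hbp : b ≤ p) :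
    (∃ k, k * p + a ≤ x ∧ x < k * p + b) ↔ a ≤ x % p ∧ x % p < b := by
  have hx := Nat.div_add_mod x p
  constructor
  · rintro ⟨k, hkx, hxk⟩
    have hdiv : x / p = k := Nat.div_eq_of_lt_le (by omega) (by rw [Nat.succ_mul]; omega)
    rw [hdiv] at hx
    constructor <;> linarith [Nat.mul_comm p k]
  · rintro ⟨hax, hxb⟩
    exact ⟨x / p, by linarith [Nat.mul_comm p (x / p)], by linarith [Nat.mul_comm p (x / p)]⟩

theorem exists_mul_sub_le_lt_mul_iff_le_mod {w g x : ℕ} (hwg : 0 < w + g) :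
    (∃ k, 1 ≤ k ∧ k * (w + g) - g ≤ x ∧ x < k * (w + g)) ↔ w ≤ x % (w + g) := by
  have hshift : (∃ k, 1 ≤ k ∧ k * (w + g) - g ≤ x ∧ x < k * (w + g)) ↔
      ∃ k, k * (w + g) + w ≤ x ∧ x < k * (w + g) + (w + g) := by
    constructor
    · rintro ⟨k, hk, hkx, hxk⟩
      obtain ⟨k, rfl⟩ := Nat.exists_eq_add_of_le' hk
      exact ⟨k, by rw [Nat.succ_mul] at hkx; omega, by rwa [Nat.succ_mul] at hxk⟩
    · rintro ⟨k, hkx, hxk⟩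
      exact ⟨k + 1, by omega, by rw [Nat.succ_mul]; omega, by rwa [Nat.succ_mul]⟩
  rw [hshift, exists_mul_add_le_lt_iff le_rfl, and_iff_left (Nat.mod_lt x hwg)]

theorem mod_lt_iff_exists_mul_le_lt_mul_add {w g x : ℕ} :
    x % (w + g) < w ↔ ∃ k, k * (w + g) ≤ x ∧ x < k * (w + g) + w := by
  simpa using (exists_mul_add_le_lt_iff (a := 0) (x := x) (Nat.le_add_right w g)).symm

theorem mul_div_le_card_filter_mod_lt {p w : ℕ} (n : ℕ) (hwp : w ≤ p) :
    w * (n / p) ≤ #{x ∈ range n | x % p < w} := by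
  have hcard : #(range w ×ˢ range (n / p)) = w * (n / p) := by simp
  rw [← hcard]
  refine card_le_card_of_injOn (fun ab => ab.2 * p + ab.1) ?_ ?_
  · rintro ⟨a, b⟩ hab
    simp only [coe_product, Set.mem_prod, mem_coe, mem_range] at hab
    have : (b + 1) * p ≤ n := (Nat.mul_le_mul_right p hab.2).trans (Nat.div_mul_le_self n p)
    simp only [coe_filter, mem_range, Set.mem_ofPred_eq]
    rw [Nat.mul_add_mod_of_lt (by omega)]
    exact ⟨by rw [Nat.succ_mul] at this; omega, hab.1⟩
  · rintro ⟨a, b⟩ hab ⟨a', b'⟩ hab' heq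
    simp only [coe_product, Set.mem_prod, mem_coe, mem_range] at hab hab' heq
    have ha : a = a' := by
      simpa [Nat.mul_add_mod_of_lt (show a < p by omega),
        Nat.mul_add_mod_of_lt (show a' < p by omega)] using congrArg (· % p) heq
    subst ha
    simp [Nat.eq_of_mul_eq_mul_right (by omega : 0 < p) (by omega : b * p = b' * p)]

end Nat

theorem Set.ncard_setOf_forall_apply {ι α : Type*} [Fintype ι] (P : α → Prop) :
    {f : ι → α | ∀ i, P (f i)}.ncard = {x | P x}.ncard ^ Fintype.card ι := by
  rw [← Nat.card_coe_set_eq, ← Nat.card_coe_set_eq]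
  exact (Nat.card_congr (Equiv.subtypePiEquivPi (β := fun _ : ι => α) (p := fun _ => P))).trans
    (by rw [Nat.card_fun, Nat.card_eq_fintype_card (α := ι)]; rfl)

theorem Fin.ncard_setOf_val_eq {n : ℕ} (P : ℕ → Prop) [DecidablePred P] :
    {x : Fin n | P x}.ncard = #{x ∈ range n | P x} := by
  rw [Set.ncard_eq_toFinset_card', Set.toFinset_ofPred, ← Nat.Iio_eq_range,
    ← Fin.map_valEmbedding_univ, filter_map, card_map]
  rfl

theorem Int.eq_of_mem_Ico_mul_sub_add {s w q x k k' : ℤ} (hs : w + 2 * q ≤ s)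
    (h : k * s - q ≤ x ∧ x < k * s + w + q) (h' : k' * s - q ≤ x ∧ x < k' * s + w + q) :
    k = k' := by
  -- `x` lies in both intervals, so they are nonempty: `w + 2q > 0`.
  have hspos : 0 < s := by linarith
  have hlt : k < k' + 1 := lt_of_mul_lt_mul_right (by linarith) hspos.le
  have hlt' : k' < k + 1 := lt_of_mul_lt_mul_right (by linarith) hspos.le
  omega

theorem one_sub_div_mul_inv_one_add_div_mul {w g n : ℝ} (hw : w ≠ 0) (hn : n ≠ 0)
    (hwg : w + g ≠ 0) :
    (1 - (w + g) / n) * (1 + g / w)⁻¹ * n = w * (n / (w + g) - 1) := by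
  have : 1 + g / w = (w + g) / w := by field_simp
  rw [this]
  field_simp

theorem stmt19_general (d n w q : ℕ) (hw : 1 ≤ w)
    (hn : w + 2 * q ≤ n)
    (Γ₀ : Set (Fin d → Fin n))
    (hΓ : Γ₀ = {β | ∃ j : Fin d, ∃ k : ℕ, 1 ≤ k ∧
      k * (w + 2 * q) - 2 * q ≤ (β j : ℕ) ∧ (β j : ℕ) < k * (w + 2 * q)}) :
    (w : ℝ) ^ d * ((n : ℝ) / (w + 2 * q) - 1) ^ d ≤ (Γ₀ᶜ.ncard : ℝ) ∧
    (1 - ((w : ℝ) + 2 * q) / n) ^ d * ((1 + 2 * (q : ℝ) / w) ^ d)⁻¹ * (n : ℝ) ^ d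
      ≤ (Γ₀ᶜ.ncard : ℝ) ∧
    Γ₀ᶜ = (⋃ κ : Fin d → ℕ, {β : Fin d → Fin n |
      ∀ j, κ j * (w + 2 * q) ≤ (β j : ℕ) ∧ (β j : ℕ) < κ j * (w + 2 * q) + w}) ∧
    ∀ κ κ' : Fin d → ℕ, κ ≠ κ' →
      Disjoint
        {β : Fin d → Fin n | ∀ j,
          (κ j * (w + 2 * q) : ℤ) - q ≤ ((β j : ℕ) : ℤ) ∧
          ((β j : ℕ) : ℤ) < κ j * (w + 2 * q) + w + q}
        {β : Fin d → Fin n | ∀ j,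
          (κ' j * (w + 2 * q) : ℤ) - q ≤ ((β j : ℕ) : ℤ) ∧
          ((β j : ℕ) : ℤ) < κ' j * (w + 2 * q) + w + q} := by
  have hcompl : Γ₀ᶜ = {β : Fin d → Fin n | ∀ j, (β j : ℕ) % (w + 2 * q) < w} := by
    ext β
    simp only [hΓ, Set.mem_compl_iff, Set.mem_ofPred_eq, not_exists,
      Nat.exists_mul_sub_le_lt_mul_iff_le_mod (show 0 < w + 2 * q by omega), not_le]
  have hfloor : (n : ℝ) / (w + 2 * q) - 1 ≤ (n / (w + 2 * q) : ℕ) := by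
    have := Nat.sub_one_lt_floor ((n : ℝ) / (w + 2 * q : ℕ))
    rw [Nat.floor_div_eq_div] at this
    exact_mod_cast this.le
  have hcount : (w : ℝ) * ((n : ℝ) / (w + 2 * q) - 1) ≤
      {x : Fin n | (x : ℕ) % (w + 2 * q) < w}.ncard := by
    rw [Fin.ncard_setOf_val_eq (· % (w + 2 * q) < w)]
    calc (w : ℝ) * ((n : ℝ) / (w + 2 * q) - 1) ≤ w * (n / (w + 2 * q) : ℕ) := by gcongr
      _ ≤ _ := by exact_mod_cast Nat.mul_div_le_card_filter_mod_lt n (Nat.le_add_right w (2 * q))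
  have hlower : (w : ℝ) ^ d * ((n : ℝ) / (w + 2 * q) - 1) ^ d ≤ (Γ₀ᶜ.ncard : ℝ) := by
    have hnonneg : 0 ≤ (n : ℝ) / (w + 2 * q) - 1 :=
      sub_nonneg.2 ((one_le_div (by positivity)).2 (by exact_mod_cast hn))
    rw [hcompl, Set.ncard_setOf_forall_apply (fun x : Fin n => (x : ℕ) % (w + 2 * q) < w),
      Fintype.card_fin, ← mul_pow, Nat.cast_pow]
    exact pow_le_pow_left₀ (by positivity) hcount d
  refine ⟨hlower, ?_, ?_, ?_⟩
  · rwa [← inv_pow, ← mul_pow, ← mul_pow, one_sub_div_mul_inv_one_add_div_mul (by positivity)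
      (by norm_cast; omega) (by positivity), mul_pow]
  · rw [hcompl]
    ext β
    simp only [Set.mem_ofPred_eq, Set.mem_iUnion, Nat.mod_lt_iff_exists_mul_le_lt_mul_add]
    exact Classical.skolem
  · intro κ κ' hne
    refine Set.disjoint_left.2 fun β hβ hβ' => hne (funext fun j => ?_)
    exact_mod_cast Int.eq_of_mem_Ico_mul_sub_add le_rfl (hβ j) (hβ' j)

/-- The grid set `Γ₀ ⊆ {0,…,n-1}^d` of slabs of width `2q` spaced every `w + 2q` has
complement of size at least `w^d(n/(w+2q) - 1)^d ≥ (1-(w+2q)/n)^d(1+2q/w)^{-d}n^d`;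
moreover, the complement is the union of axis-parallel boxes of width `w` whose lower
corners have coordinates multiples of `w+2q`, and the `q`-neighbourhoods of distinct such
boxes are pairwise disjoint (the boxes are more than `2q` apart). -/
theorem stmt19 (d n w q : ℕ) (hd : 1 ≤ d) (hw : 1 ≤ w) (hq : 1 ≤ q)
    (hn : w + 2 * q ≤ n)
    (Γ₀ : Set (Fin d → Fin n))
    (hΓ : Γ₀ = {β | ∃ j : Fin d, ∃ k : ℕ, 1 ≤ k ∧
      k * (w + 2 * q) - 2 * q ≤ (β j : ℕ) ∧ (β j : ℕ) < k * (w + 2 * q)}) :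
    (w : ℝ) ^ d * ((n : ℝ) / (w + 2 * q) - 1) ^ d ≤ (Γ₀ᶜ.ncard : ℝ) ∧
    (1 - ((w : ℝ) + 2 * q) / n) ^ d * ((1 + 2 * (q : ℝ) / w) ^ d)⁻¹ * (n : ℝ) ^ d
      ≤ (Γ₀ᶜ.ncard : ℝ) ∧
    Γ₀ᶜ = (⋃ κ : Fin d → ℕ, {β : Fin d → Fin n |
      ∀ j, κ j * (w + 2 * q) ≤ (β j : ℕ) ∧ (β j : ℕ) < κ j * (w + 2 * q) + w}) ∧
    ∀ κ κ' : Fin d → ℕ, κ ≠ κ' →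
      Disjoint
        {β : Fin d → Fin n | ∀ j,
          (κ j * (w + 2 * q) : ℤ) - q ≤ ((β j : ℕ) : ℤ) ∧
          ((β j : ℕ) : ℤ) < κ j * (w + 2 * q) + w + q}
        {β : Fin d → Fin n | ∀ j,
          (κ' j * (w + 2 * q) : ℤ) - q ≤ ((β j : ℕ) : ℤ) ∧
          ((β j : ℕ) : ℤ) < κ' j * (w + 2 * q) + w + q} :=
  stmt19_general d n w q hw hn Γ₀ hΓ
end
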